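/- arXiv:2309.08915 — 14 statements merged into one kernel-verified Lean document; each statement's English description precedes it below -/
import Mathlib

section
/- Let n > 1, q > 1 be integers, 1 ≤ k ≤ n-1, and let I, J be a bipartition of Z_q (I ∪ J = Z_q, I ∩ J = ∅, both nonempty). Then the code S_{I,J}^{(k)}(n), consisting of all s = (s_1,...,s_n) ∈ Z_q^n such that (s_1,...,s_k) ∈ I^k, s_{k+1} ∈ J, s_n ∈ J, and the subsequence (s_{k+2},...,s_{n-1}) is I^k-free, is a cross-bifix-free code. -/
open List

/-- A code (set of words) is cross-bifix-free: no proper nonempty prefix of a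
codeword equals a proper nonempty suffix of a codeword. -/
def IsCBF {α : Type*} (C : Set (List α)) : Prop :=
  ∀ u ∈ C, ∀ v ∈ C, ∀ w : List α, w ≠ [] → w.length < u.length → w.length < v.length →
    ¬ (w <+: u ∧ w <:+ v)

/-- A word is bifix-free: no proper nonempty prefix equals a proper nonempty suffix. -/
def BifixFree {α : Type*} (u : List α) : Prop :=
  ∀ w : List α, w ≠ [] → w.length < u.length → w <+: u → ¬ w <:+ u

/-- `w` is `I^k`-free: no `k` consecutive coordinates of `w` all lie in `I`. -/
def IkFree {α : Type*} (I : Set α) (k : ℕ) (w : List α) : Prop :=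
  ¬ ∃ y : List α, y <:+: w ∧ y.length = k ∧ ∀ x ∈ y, x ∈ I

/-- The code `S_{I,J}^{(k)}(n)`: words of length `n` whose first `k` coordinates lie
in `I`, whose `(k+1)`-th and `n`-th coordinates lie in `J`, and whose subword from
position `k+2` to `n-1` (1-indexed) is `I^k`-free. -/
def Sijk {q : ℕ} (I J : Set (Fin q)) (k n : ℕ) : Set (List (Fin q)) :=
  {w | w.length = n ∧ (∀ x ∈ w.take k, x ∈ I) ∧ (∃ a ∈ J, w[k]? = some a) ∧
       (∃ a ∈ J, w[n-1]? = some a) ∧ IkFree I k ((w.drop (k+1)).take (n - k - 2))}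

theorem stmt2 (q n k : ℕ) (hn : 1 < n) (hq : 1 < q) (hk1 : 1 ≤ k) (hk2 : k ≤ n - 1)
    (I J : Set (Fin q)) (hIJ : I ∪ J = Set.univ) (hd : I ∩ J = ∅)
    (hI : I.Nonempty) (hJ : J.Nonempty) :
    IsCBF (Sijk I J k n) := by
  rintro u hu v hv w hw hwu hwv ⟨hpre, hsuf⟩
  obtain ⟨hul, huI, ⟨a, haJ, hua⟩, ⟨b, hbJ, hub⟩, huF⟩ := hu
  obtain ⟨hvl, hvI, ⟨c, hcJ, hvc⟩, ⟨d, hdJ, hvd⟩, hvF⟩ := hv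
  set m := w.length with hm
  have hmn : m < n := hul ▸ hwu
  have hm1 : 1 ≤ m := List.length_pos_iff.mpr hw
  have hkn : k < n := by omega
  have hdisj : ∀ x : Fin q, x ∈ I → x ∈ J → False := by
    intro x hxI hxJ
    have : x ∈ I ∩ J := ⟨hxI, hxJ⟩
    simp [hd] at this
  have huIget : ∀ i (hi : i < k), u[i]'(by omega) ∈ I := by
    intro i hi
    have hlt : i < (u.take k).length := by simp [hul]; omega
    have := huI _ (List.getElem_mem hlt)
    rwa [List.getElem_take] at this
  by_cases hmk : m ≤ k
  · -- last element of w is in I (via u) and in J (via v)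
    have h1 : w[m-1]'(by omega) ∈ I := by
      rw [hpre.getElem (by omega)]
      exact huIget _ (by omega)
    have h2 : w[m-1]'(by omega) ∈ J := by
      rw [hsuf.getElem (by omega)]
      have hidx : v.length - w.length + (m - 1) = n - 1 := by omega
      have hvd' : v[n-1]'(by omega) = d := by
        rw [List.getElem?_eq_getElem (by omega)] at hvd
        exact Option.some.inj hvd
      rw [getElem_congr (rfl : v = v) hidx (by rw [hidx]; omega), hvd']
      exact hdJ
    exact hdisj _ h1 h2
  · push_neg at hmk
    -- m ≥ k + 1
    have hvkJ : v[k]'(by omega) ∈ J := by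
      have hvceq : v[k]'(by omega) = c := by
        rw [List.getElem?_eq_getElem (by omega)] at hvc
        exact Option.some.inj hvc
      rw [hvceq]; exact hcJ
    by_cases hnm : n - m ≤ k
    · -- position k of v lies in the I-block
      have hi : k - (n - m) < k := by omega
      have h1 : w[k - (n-m)]'(by omega) ∈ I := by
        rw [hpre.getElem (by omega)]
        exact huIget _ hi
      have h2 : w[k - (n-m)]'(by omega) = v[k]'(by omega) := by
        rw [hsuf.getElem (by omega)]
        exact getElem_congr rfl (by simp [hvl, ← hm]; omega) (by simp [hvl, ← hm]; omega)
      exact hdisj _ (h2 ▸ h1) hvkJ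
    · push_neg at hnm
      -- the I-block u.take k sits inside the middle of v
      apply hvF
      refine ⟨u.take k, ?_, by simp [hul]; omega, huI⟩
      have hwval : w = v.drop (n - m) := by
        have := List.suffix_iff_eq_drop.mp hsuf
        rwa [hvl, ← hm] at this
      have hukw : u.take k = w.take k := by
        have := List.prefix_iff_eq_take.mp hpre
        rw [← hm] at this
        rw [this, List.take_take]
        congr 1; omega
      set N := n - k - 2 with hN
      set j := n - m - (k + 1) with hj
      set dd := v.drop (k + 1) with hdd
      have hddlen : dd.length = n - (k+1) := by simp [hdd, hvl]
      have hkey : u.take k = ((dd.take N).drop j).take k := by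
        rw [List.drop_take, List.take_take, hukw, hwval]
        rw [List.drop_drop]
        have h1 : k + 1 + j = n - m := by omega
        have h2 : k ⊓ (N - j) = k := by
          have : k ≤ N - j := by omega
          omega
        rw [h1, h2]
      rw [hkey]
      exact (List.take_prefix _ _).isInfix.trans (List.drop_suffix _ _).isInfix
end

section
/- Let n > 1, q > 1 and 1 ≤ k ≤ n-1. The code S_q^{(k)}(n) of all (s_1,...,s_n) ∈ Z_q^n with s_1 = ... = s_k = 0, s_{k+1} ≠ 0, s_n ≠ 0, and (s_{k+2},...,s_{n-1}) containing no k consecutive zeros, is a cross-bifix-free code. -/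
open List

/-- The classical code `S_q^{(k)}(n)`: first `k` coordinates zero, `(k+1)`-th and
`n`-th coordinates nonzero, and no `k` consecutive zeros from position `k+2` to `n-1`. -/
def SqCode (q k n : ℕ) : Set (List (Fin q)) :=
  Sijk {x : Fin q | x.val = 0} {x : Fin q | x.val ≠ 0} k n

theorem stmt3 (q n k : ℕ) (hn : 1 < n) (hq : 1 < q) (hk1 : 1 ≤ k) (hk2 : k ≤ n - 1) :
    IsCBF (SqCode q k n) := by
  rintro u hu v hv w hw hwu hwv ⟨⟨s, hs⟩, ⟨t, ht⟩⟩
  obtain ⟨hul, huI, -, -, -⟩ := hu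
  obtain ⟨hvl, -, ⟨c, hc, hvc⟩, ⟨d, hd, hvd⟩, hvF⟩ := hv
  -- basic length facts
  have htw : t.length + w.length = n := by
    have := congrArg List.length ht; simpa [hvl] using this
  rw [hul] at hwu; rw [hvl] at hwv
  -- index transfer lemmas
  have hwu' : ∀ i, i < w.length → u[i]? = w[i]? := by
    intro i hi
    rw [← hs, List.getElem?_append_left hi]
  have hwv' : ∀ i, v[t.length + i]? = w[i]? := by
    intro i
    rw [← ht, List.getElem?_append_right (Nat.le_add_right _ _)]
    simp
  -- the first k entries of u (hence of w for indices < min k w.length) are zero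
  have hzero : ∀ i, i < k → ∀ x : Fin q, u[i]? = some x → x.val = 0 := by
    intro i hik x hx
    have : (u.take k)[i]? = some x := by
      rw [List.getElem?_take_of_lt hik]; exact hx
    exact huI x (List.mem_of_getElem? this)
  by_cases hlk : w.length ≤ k
  · -- short case: last entry of w is both zero and nonzero
    have hwpos : 0 < w.length := List.length_pos_iff.2 hw
    have h1 : v[n-1]? = w[w.length - 1]? := by
      have : n - 1 = t.length + (w.length - 1) := by omega
      rw [this, hwv']
    have h2 : u[w.length - 1]? = w[w.length - 1]? := hwu' _ (by omega)
    have : d.val = 0 := hzero (w.length - 1) (by omega) d (by rw [h2, ← h1]; exact hvd)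
    exact hd this
  · push_neg at hlk
    set p := t.length with hp
    have hp1 : 1 ≤ p := by omega
    -- p ≥ k + 1
    have hpk : k + 1 ≤ p := by
      by_contra hcon
      push_neg at hcon
      have hkp : k = p + (k - p) := by omega
      have : u[k - p]? = some c := by
        rw [hwu' _ (by omega), ← hwv' (k - p), ← hkp]; exact hvc
      exact hc (hzero _ (by omega) c this)
    -- build the all-zero k-window inside the middle of v
    set M := (v.drop (k+1)).take (n - k - 2) with hM
    set y := (M.drop (p - (k+1))).take k with hy
    have hMlen : M.length = n - k - 2 := by
      simp [hM, List.length_take, List.length_drop, hvl]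
      omega
    have hylen : y.length = k := by
      simp [hy, List.length_take, List.length_drop, hMlen]
      omega
    refine hvF ⟨y, ?_, hylen, ?_⟩
    · exact (List.take_prefix _ _).isInfix.trans
        ((List.drop_suffix _ _).isInfix.trans (List.infix_refl M))
    · intro x hxy
      obtain ⟨i, hi⟩ := List.mem_iff_getElem?.1 hxy
      have hik : i < k := by
        have := (List.getElem?_eq_some_iff.1 hi).1
        omega
      have : y[i]? = u[i]? := by
        rw [hy, List.getElem?_take_of_lt hik, List.getElem?_drop, hM,
          List.getElem?_take_of_lt (by omega : p - (k+1) + i < n - k - 2),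
          List.getElem?_drop]
        have : k + 1 + (p - (k + 1) + i) = p + i := by omega
        rw [this, hwv' i, hwu' i (by omega)]
      rw [this] at hi
      exact hzero i hik x hi
end

section
/- Let n ≥ 5, q > 1, and let I, J be a bipartition of Z_q. If n/2 ≤ k ≤ n-2, then the cross-bifix-free code S_{I,J}^{(k)}(n) is expandable; that is, there exists x ∈ Z_q^n \ S_{I,J}^{(k)}(n) such that S_{I,J}^{(k)}(n) ∪ {x} is still a cross-bifix-free code. -/
open List

private lemma suffGet {α} {w v : List α} (h : w <:+ v) {t m : ℕ} (ht : t < w.length)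
    (hm : m + w.length = v.length + t) (hmv : m < v.length) : w[t] = v[m] := by
  obtain ⟨s, rfl⟩ := h
  have hml : m = s.length + t := by simp at hm; omega
  subst hml
  rw [List.getElem_append_right (by omega)]
  simp


set_option maxHeartbeats 4000000 in
theorem stmt4 (q n k : ℕ) (hn : 5 ≤ n) (hq : 1 < q) (hk1 : n ≤ 2 * k) (hk2 : k ≤ n - 2)
    (I J : Set (Fin q)) (hIJ : I ∪ J = Set.univ) (hd : I ∩ J = ∅)
    (hI : I.Nonempty) (hJ : J.Nonempty) :
    ∃ x : List (Fin q), x.length = n ∧ x ∉ Sijk I J k n ∧ IsCBF (Sijk I J k n ∪ {x}) := by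
  obtain ⟨i, hi⟩ := hI
  obtain ⟨j, hj⟩ := hJ
  have hdisj : ∀ a : Fin q, a ∈ I → a ∈ J → False := by
    intro a h1 h2
    have : a ∈ I ∩ J := ⟨h1, h2⟩
    rw [hd] at this
    exact this
  set f : ℕ → Fin q := fun m => if m = k-1 ∨ m = n-1 ∨ (n = 2*k ∧ m = k) then j else i
    with hfdef
  have hfJ : ∀ m, (m = k-1 ∨ m = n-1 ∨ (n = 2*k ∧ m = k)) → f m = j := fun m hm => if_pos hm
  have hfI : ∀ m, ¬ (m = k-1 ∨ m = n-1 ∨ (n = 2*k ∧ m = k)) → f m = i := fun m hm => if_neg hm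
  have hfJ' : ∀ m, f m ∈ J → (m = k-1 ∨ m = n-1 ∨ (n = 2*k ∧ m = k)) := by
    intro m hm
    by_cases hc : m = k-1 ∨ m = n-1 ∨ (n = 2*k ∧ m = k)
    · exact hc
    · rw [hfI m hc] at hm; exact absurd hm (fun h => hdisj i hi h)
  set x : List (Fin q) := (List.range n).map f with hxdef
  have hxlen : x.length = n := by simp [hxdef]
  have hxget : ∀ (m : ℕ) (hm : m < x.length), x[m] = f m := by
    intro m hm
    simp [hxdef]
  -- facts about codewords
  have hSI : ∀ u ∈ Sijk I J k n, ∀ t (ht : t < u.length), t < k → u[t] ∈ I := by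
    intro u hu t ht htk
    have h1 : (u.take k)[t]'(by simp [hu.1]; omega) = u[t] := List.getElem_take ..
    exact hu.2.1 _ (h1 ▸ List.getElem_mem _)
  have hSk : ∀ u ∈ Sijk I J k n, ∀ h : k < u.length, u[k] ∈ J := by
    intro u hu h
    obtain ⟨a, haJ, ha⟩ := hu.2.2.1
    rw [List.getElem?_eq_getElem h] at ha
    exact (Option.some.inj ha) ▸ haJ
  have hSlast : ∀ u ∈ Sijk I J k n, ∀ h : n-1 < u.length, u[n-1] ∈ J := by
    intro u hu h
    obtain ⟨a, haJ, ha⟩ := hu.2.2.2.1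
    rw [List.getElem?_eq_getElem h] at ha
    exact (Option.some.inj ha) ▸ haJ
  refine ⟨x, hxlen, ?_, ?_⟩
  · -- x ∉ S
    intro hx
    have h1 : x[k-1]'(by omega) ∈ I := hSI x hx (k-1) (by omega) (by omega)
    rw [hxget (k-1) (by omega), hfJ (k-1) (Or.inl rfl)] at h1
    exact hdisj j h1 hj
  · -- CBF
    intro u hu v hv w hw0 hwu hwv hwp
    obtain ⟨hpre, hsuf⟩ := hwp
    have hwlen : 1 ≤ w.length := List.length_pos_iff.mpr hw0
    rcases hu with hu | hu <;> rcases hv with hv | hv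
    · -- u, v ∈ S
      have hulen := hu.1
      have hvlen := hv.1
      by_cases hlk : w.length ≤ k
      · have h1 : w[w.length-1]'(by omega) = u[w.length-1]'(by omega) :=
          hpre.getElem (by omega)
        have h2 : w[w.length-1]'(by omega) = v[n-1]'(by omega) :=
          suffGet hsuf (by omega) (by omega) (by omega)
        have hIu : u[w.length-1]'(by omega) ∈ I := hSI u hu _ _ (by omega)
        have hJv : v[n-1]'(by omega) ∈ J := hSlast v hv _
        rw [← h1] at hIu; rw [← h2] at hJv
        exact hdisj _ hIu hJv
      · have h1 : w[k + w.length - n]'(by omega) = u[k + w.length - n]'(by omega) :=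
          hpre.getElem (by omega)
        have h2 : w[k + w.length - n]'(by omega) = v[k]'(by omega) :=
          suffGet hsuf (by omega) (by omega) (by omega)
        have hIu : u[k + w.length - n]'(by omega) ∈ I := hSI u hu _ _ (by omega)
        have hJv : v[k]'(by omega) ∈ J := hSk v hv _
        rw [← h1] at hIu; rw [← h2] at hJv
        exact hdisj _ hIu hJv
    · -- u ∈ S, v = x
      rw [Set.mem_singleton_iff] at hv; subst hv
      rw [hxlen] at hwv
      have hulen := hu.1
      by_cases hlk : w.length ≤ k
      · have h1 : w[w.length-1]'(by omega) = u[w.length-1]'(by omega) :=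
          hpre.getElem (by omega)
        have h2 : w[w.length-1]'(by omega) = x[n-1]'(by omega) :=
          suffGet hsuf (by omega) (by omega) (by omega)
        have hIu : u[w.length-1]'(by omega) ∈ I := hSI u hu _ _ (by omega)
        rw [← h1] at hIu
        rw [h2, hxget (n-1) (by omega), hfJ (n-1) (Or.inr (Or.inl rfl))] at hIu
        exact hdisj j hIu hj
      · have h1 : w[k]'(by omega) = u[k]'(by omega) := hpre.getElem (by omega)
        have hJu : u[k]'(by omega) ∈ J := hSk u hu _
        rw [← h1] at hJu
        have h2 : w[k]'(by omega) = x[n + k - w.length]'(by omega) :=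
          suffGet hsuf (by omega) (by omega) (by omega)
        rw [h2, hxget (n + k - w.length) (by omega)] at hJu
        have hc := hfJ' _ hJu
        rcases hc with hc | hc | ⟨hc1, hc2⟩
        · omega
        · -- w.length = k + 1
          have hl : w.length = k + 1 := by omega
          have h3 : w[2*k - n]'(by omega) = u[2*k - n]'(by omega) :=
            hpre.getElem (by omega)
          have hIu2 : u[2*k - n]'(by omega) ∈ I := hSI u hu _ _ (by omega)
          rw [← h3] at hIu2
          have h4 : w[2*k - n]'(by omega) = x[k-1]'(by omega) :=
            suffGet hsuf (by omega) (by omega) (by omega)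
          rw [h4, hxget (k-1) (by omega), hfJ (k-1) (Or.inl rfl)] at hIu2
          exact hdisj j hIu2 hj
        · omega
    · -- u = x, v ∈ S
      rw [Set.mem_singleton_iff] at hu; subst hu
      rw [hxlen] at hwu
      have hvlen := hv.1
      have h1 : w[w.length-1]'(by omega) = x[w.length-1]'(by omega) :=
        hpre.getElem (by omega)
      have h2 : w[w.length-1]'(by omega) = v[n-1]'(by omega) :=
        suffGet hsuf (by omega) (by omega) (by omega)
      have hJv : v[n-1]'(by omega) ∈ J := hSlast v hv _
      rw [← h2] at hJv
      rw [h1, hxget (w.length-1) (by omega)] at hJv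
      have hc := hfJ' _ hJv
      rcases hc with hc | hc | ⟨hc1, hc2⟩
      · -- w.length = k
        have hl : w.length = k := by omega
        have h3 : w[2*k - n]'(by omega) = x[2*k - n]'(by omega) :=
          hpre.getElem (by omega)
        have h4 : w[2*k - n]'(by omega) = v[k]'(by omega) :=
          suffGet hsuf (by omega) (by omega) (by omega)
        have hJv2 : v[k]'(by omega) ∈ J := hSk v hv _
        rw [← h4, h3, hxget (2*k - n) (by omega)] at hJv2
        have hc2 := hfJ' _ hJv2
        omega
      · omega
      · -- n = 2k, w.length = k+1
        have hl : w.length = k + 1 := by omega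
        have h3 : w[1]'(by omega) = x[1]'(by omega) := hpre.getElem (by omega)
        have h4 : w[1]'(by omega) = v[k]'(by omega) :=
          suffGet hsuf (by omega) (by omega) (by omega)
        have hJv2 : v[k]'(by omega) ∈ J := hSk v hv _
        rw [← h4, h3, hxget 1 (by omega)] at hJv2
        have hc3 := hfJ' _ hJv2
        omega
    · -- u = x, v = x
      rw [Set.mem_singleton_iff] at hu; subst hu
      rw [Set.mem_singleton_iff] at hv; subst hv
      rw [hxlen] at hwu
      have h1 : w[w.length-1]'(by omega) = x[w.length-1]'(by omega) :=
        hpre.getElem (by omega)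
      have h2 : w[w.length-1]'(by omega) = x[n-1]'(by omega) :=
        suffGet hsuf (by omega) (by omega) (by omega)
      have hj1 : f (w.length-1) = j := by
        rw [← hxget (w.length-1) (by omega), ← h1, h2, hxget (n-1) (by omega),
          hfJ (n-1) (Or.inr (Or.inl rfl))]
      have hc := hfJ' _ (hj1 ▸ hj)
      rcases hc with hc | hc | ⟨hc1, hc2⟩
      · -- w.length = k
        have hl : w.length = k := by omega
        by_cases hn2k : n = 2*k
        · have h3 : w[0]'(by omega) = x[0]'(by omega) := hpre.getElem (by omega)
          have h4 : w[0]'(by omega) = x[k]'(by omega) :=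
            suffGet hsuf (by omega) (by omega) (by omega)
          have : f 0 = f k :=
            (hxget 0 (by omega)).symm.trans (h3.symm.trans (h4.trans (hxget k (by omega))))
          rw [hfI 0 (by omega), hfJ k (by omega)] at this
          exact hdisj i hi (this ▸ hj)
        · have h3 : w[2*k - n - 1]'(by omega) = x[2*k - n - 1]'(by omega) :=
            hpre.getElem (by omega)
          have h4 : w[2*k - n - 1]'(by omega) = x[k-1]'(by omega) :=
            suffGet hsuf (by omega) (by omega) (by omega)
          have : f (2*k - n - 1) = f (k-1) :=
            (hxget (2*k-n-1) (by omega)).symm.trans (h3.symm.trans (h4.trans (hxget (k-1) (by omega))))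
          rw [hfI (2*k-n-1) (by omega), hfJ (k-1) (by omega)] at this
          exact hdisj i hi (this ▸ hj)
      · omega
      · -- n = 2k, w.length = k+1
        have hl : w.length = k + 1 := by omega
        have h3 : w[0]'(by omega) = x[0]'(by omega) := hpre.getElem (by omega)
        have h4 : w[0]'(by omega) = x[k-1]'(by omega) :=
          suffGet hsuf (by omega) (by omega) (by omega)
        have : f 0 = f (k-1) :=
          (hxget 0 (by omega)).symm.trans (h3.symm.trans (h4.trans (hxget (k-1) (by omega))))
        rw [hfI 0 (by omega), hfJ (k-1) (by omega)] at this
        exact hdisj i hi (this ▸ hj)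
end

section
/- Let n ≥ 5, q > 1, and let I, J be a bipartition of Z_q. The cross-bifix-free code S_{I,J}^{(k)}(n) is non-expandable if and only if k = n-1 or 1 ≤ k < n/2. -/
open List

/-!
Take `J = Iᶜ`. A word lies in `S_{I,J}^{(k)}(n)` exactly when it has length `n`, begins with
`I^k`, ends with a letter of `J`, and has no other occurrence of `I^k`. An overlap of two
codewords would carry the leading `I^k` of the first one to a later position of the second, so
the code is cross-bifix-free.

If `k = n - 1` or `2k < n`, every word `x ∉ S` overlaps some codeword. When `x` ends with a letter
`a ∈ I`, use `a^k j^(n-k)`. When `x` begins with `I^k`, it has a later occurrence, and the suffix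
of `x` from the last occurrence, padded on the right with `j`s, is a codeword. Otherwise let `m`
be the position of the first letter of `x` outside `I`: padding `x₀ … x_m` on the left with `i`s
(if `k = n - 1`), or with `i^k j^(n-k-m-1)` (if `2k < n`), gives a codeword. If instead
`n ≤ 2k ≤ 2n - 4`, the word `i^(k-1) j^(n-k-1) i j` overlaps neither itself nor any codeword.
-/

namespace CrossBifixFree

section Words

variable {α : Type*} {A : Set α} {k n p t : ℕ} {u v w : List α} {i j : α}

def MemAt (A : Set α) (w : List α) (p : ℕ) : Prop := ∃ a ∈ A, w[p]? = some a

def OccursAt (A : Set α) (k : ℕ) (w : List α) (p : ℕ) : Prop := ∀ t < k, MemAt A w (p + t)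

theorem MemAt.lt_length (h : MemAt A w p) : p < w.length := by
  obtain ⟨a, -, ha⟩ := h
  exact (List.getElem?_eq_some_iff.1 ha).1

theorem memAt_congr (h : u[p]? = v[t]?) : MemAt A u p ↔ MemAt A v t := by
  simp only [MemAt, h]

theorem MemAt.not_compl (h : MemAt A w p) : ¬ MemAt Aᶜ w p := by
  rintro ⟨b, hb, hwb⟩
  obtain ⟨a, ha, hwa⟩ := h
  exact hb (Option.some_inj.1 (hwa.symm.trans hwb) ▸ ha)

theorem memAt_compl_iff : MemAt Aᶜ w p ↔ p < w.length ∧ ¬ MemAt A w p := by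
  refine ⟨fun h => ⟨h.lt_length, fun h' => h'.not_compl h⟩, fun ⟨hp, h⟩ => ?_⟩
  have hwp := List.getElem?_eq_getElem hp
  exact ⟨w[p], fun ha => h ⟨w[p], ha, hwp⟩, hwp⟩

theorem memAt_append_of_lt (h : p < u.length) : MemAt A (u ++ v) p ↔ MemAt A u p :=
  memAt_congr (List.getElem?_append_left h)

theorem memAt_append_of_le (h : u.length ≤ p) :
    MemAt A (u ++ v) p ↔ MemAt A v (p - u.length) :=
  memAt_congr (List.getElem?_append_right h)

theorem memAt_replicate {a : α} : MemAt A (List.replicate k a) p ↔ p < k ∧ a ∈ A := by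
  simp only [MemAt, List.getElem?_replicate]
  split_ifs with h <;> simp [h]

theorem memAt_drop {s : ℕ} : MemAt A (w.drop s) p ↔ MemAt A w (s + p) :=
  memAt_congr List.getElem?_drop

theorem memAt_take_of_lt {s : ℕ} (h : p < s) : MemAt A (w.take s) p ↔ MemAt A w p :=
  memAt_congr (by rw [List.getElem?_take, if_pos h])

theorem OccursAt.add_le_length (h : OccursAt A k w p) (hk : 1 ≤ k) : p + k ≤ w.length := by
  have := (h (k - 1) (by omega)).lt_length
  omega

theorem not_occursAt_of_not_memAt (h : ¬ MemAt A w t) (hpt : p ≤ t) (htk : t < p + k) :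
    ¬ OccursAt A k w p := fun hocc =>
  h (by simpa [Nat.add_sub_cancel' hpt] using hocc (t - p) (by omega))

theorem occursAt_drop {s : ℕ} : OccursAt A k (w.drop s) p ↔ OccursAt A k w (s + p) := by
  simp only [OccursAt, memAt_drop, Nat.add_assoc]

theorem occursAt_append_iff (h : p + k ≤ u.length) :
    OccursAt A k (u ++ v) p ↔ OccursAt A k u p :=
  forall₂_congr fun _ ht => memAt_append_of_lt (by omega)

theorem occursAt_iff_forall_mem (h : p + k ≤ w.length) :
    OccursAt A k w p ↔ ∀ a ∈ (w.drop p).take k, a ∈ A := by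
  constructor
  · intro hp a ha
    obtain ⟨r, hr⟩ := List.mem_iff_getElem?.1 ha
    have hrk : r < k := by
      by_contra h; simp [h] at hr
    obtain ⟨b, hb, hwb⟩ := hp r hrk
    rw [List.getElem?_take, if_pos hrk, List.getElem?_drop, hwb] at hr
    exact Option.some_inj.1 hr ▸ hb
  · intro hall t ht
    have hget : ((w.drop p).take k)[t]? = some (w[p + t]'(by omega)) := by
      rw [List.getElem?_take, if_pos ht, List.getElem?_drop, List.getElem?_eq_getElem]
    exact ⟨_, hall _ (List.mem_of_getElem? hget), List.getElem?_eq_getElem _⟩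

theorem occursAt_take_iff {m : ℕ} (hk : 1 ≤ k) :
    OccursAt A k (w.take m) p ↔ p + k ≤ m ∧ OccursAt A k w p := by
  constructor
  · intro h
    have := h.add_le_length hk
    rw [List.length_take] at this
    exact ⟨by omega, fun t ht => (memAt_take_of_lt (by omega)).1 (h t ht)⟩
  · rintro ⟨hm, h⟩ t ht
    exact (memAt_take_of_lt (by omega)).2 (h t ht)

theorem ikFree_iff_forall_not_occursAt : IkFree A k w ↔ ∀ p, ¬ OccursAt A k w p := by
  rw [IkFree, ← not_exists, not_iff_not]
  constructor
  · rintro ⟨y, hinf, rfl, hy⟩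
    obtain ⟨p, -, hp⟩ := List.infix_iff_getElem?.1 hinf
    refine ⟨p, fun t ht => ⟨y[t], hy _ (List.getElem_mem ht), ?_⟩⟩
    rw [Nat.add_comm]
    exact hp t ht
  · rintro ⟨p, hp⟩
    rcases Nat.eq_zero_or_pos k with rfl | hk
    · exact ⟨[], List.nil_infix, rfl, by simp⟩
    have hlen := hp.add_le_length hk
    exact ⟨(w.drop p).take k, (List.take_prefix _ _).isInfix.trans (List.drop_suffix _ _).isInfix,
      by grind, (occursAt_iff_forall_mem hlen).1 hp⟩

def Overlaps (u v : List α) : Prop :=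
  ∃ ℓ, 0 < ℓ ∧ ℓ < u.length ∧ ℓ < v.length ∧ u.take ℓ = v.drop (v.length - ℓ)

theorem isCBF_iff_forall_not_overlaps {C : Set (List α)} :
    IsCBF C ↔ ∀ u ∈ C, ∀ v ∈ C, ¬ Overlaps u v := by
  refine forall₂_congr fun u _ => forall₂_congr fun v _ => ?_
  constructor
  · rintro h ⟨ℓ, h0, hu, hv, heq⟩
    refine h (u.take ℓ) (by rw [← List.length_pos_iff, List.length_take]; omega)
      (by rw [List.length_take]; omega) (by rw [List.length_take]; omega)
      ⟨List.take_prefix _ _, heq ▸ List.drop_suffix _ _⟩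
  · rintro h w hw hu hv ⟨hpre, hsuf⟩
    refine h ⟨w.length, List.length_pos_iff.2 hw, hu, hv, ?_⟩
    rw [← List.prefix_iff_eq_take.1 hpre, ← List.suffix_iff_eq_drop.1 hsuf]

theorem isCBF_union_singleton_iff {C : Set (List α)} {x : List α} :
    IsCBF (C ∪ {x}) ↔
      IsCBF C ∧ ¬ Overlaps x x ∧ ∀ u ∈ C, ¬ Overlaps u x ∧ ¬ Overlaps x u := by
  simp only [isCBF_iff_forall_not_overlaps, Set.union_singleton, Set.forall_mem_insert, forall_and]
  tauto

theorem Overlaps.exists_memAt_iff (h : Overlaps u v) :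
    ∃ ℓ, 0 < ℓ ∧ ℓ < u.length ∧ ℓ < v.length ∧
      ∀ (A : Set α) t, t < ℓ → (MemAt A u t ↔ MemAt A v (v.length - ℓ + t)) := by
  obtain ⟨ℓ, h0, hu, hv, heq⟩ := h
  refine ⟨ℓ, h0, hu, hv, fun A t ht => ?_⟩
  rw [← memAt_take_of_lt ht, heq, memAt_drop]

theorem not_overlaps_of_occursAt_zero
    (hu : OccursAt A k u 0) (hv_last : MemAt Aᶜ v (v.length - 1))
    (hv : ∀ p, 1 ≤ p → ¬ OccursAt A k v p) : ¬ Overlaps u v := by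
  intro h
  obtain ⟨ℓ, hℓ, hℓu, hℓv, hmem⟩ := h.exists_memAt_iff
  have hu_last : MemAt Aᶜ u (ℓ - 1) :=
    (hmem _ _ (by omega)).2 (by rwa [show v.length - ℓ + (ℓ - 1) = v.length - 1 by omega])
  by_cases hℓk : ℓ ≤ k
  · exact (by simpa using hu (ℓ - 1) (by omega) : MemAt A u (ℓ - 1)).not_compl hu_last
  · exact hv (v.length - ℓ) (by omega) fun t ht =>
      (hmem _ _ (by omega)).1 (by simpa using hu t ht)

theorem overlaps_append_take {x z : List α} {ℓ : ℕ} (hℓ : 0 < ℓ) (hℓx : ℓ < x.length)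
    (hz : 0 < z.length) : Overlaps x (z ++ x.take ℓ) :=
  ⟨ℓ, hℓ, hℓx, by grind, (List.drop_left' (by grind)).symm⟩

theorem exists_first_not_memAt (h : ¬ OccursAt A k w 0) :
    ∃ m < k, (∀ t < m, MemAt A w t) ∧ ¬ MemAt A w m := by
  classical
  have hex : ∃ m, m < k ∧ ¬ MemAt A w m := by simpa [OccursAt] using h
  refine ⟨Nat.find hex, (Nat.find_spec hex).1, fun t ht => ?_, (Nat.find_spec hex).2⟩
  by_contra hnot
  exact Nat.find_min hex ht ⟨by have := (Nat.find_spec hex).1; omega, hnot⟩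

def expansionWitness (i j : α) (k n : ℕ) : List α :=
  List.replicate (k - 1) i ++ List.replicate (n - k - 1) j ++ [i, j]

theorem length_expansionWitness (hk : 1 ≤ k) (hkn : k + 2 ≤ n) :
    (expansionWitness i j k n).length = n := by
  grind [expansionWitness]

theorem memAt_expansionWitness (hk : 1 ≤ k) (hkn : k + 2 ≤ n) (hi : i ∈ A) (hj : j ∉ A) :
    MemAt A (expansionWitness i j k n) t ↔ t < k - 1 ∨ t = n - 2 := by
  rw [expansionWitness]
  rcases Nat.lt_or_ge t (n - 2) with ht | ht
  · rw [memAt_append_of_lt (by grind)]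
    rcases Nat.lt_or_ge t (k - 1) with htk | htk
    · rw [memAt_append_of_lt (by simpa), memAt_replicate]
      exact iff_of_true ⟨htk, hi⟩ (.inl htk)
    · rw [memAt_append_of_le (by grind), memAt_replicate]
      exact iff_of_false (fun h => hj h.2) (by omega)
  · rw [memAt_append_of_le (by grind)]
    obtain ⟨s, rfl⟩ := Nat.exists_eq_add_of_le ht
    rw [show n - 2 + s - (List.replicate (k - 1) i ++ List.replicate (n - k - 1) j).length = s by
      grind]
    rcases s with _ | _ | s
    · exact iff_of_true ⟨i, hi, rfl⟩ (.inr rfl)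
    · exact iff_of_false (fun ⟨b, hb, hjb⟩ => hj (Option.some.inj hjb ▸ hb)) (by omega)
    · exact iff_of_false (fun h => absurd h.lt_length (by simp)) (by omega)
end Words

section Sijk

variable {q k n : ℕ} {I : Set (Fin q)} {w x y : List (Fin q)} {i j : Fin q}

theorem mem_Sijk_iff (hk : 1 ≤ k) (hkn : k < n) :
    w ∈ Sijk I Iᶜ k n ↔ w.length = n ∧ OccursAt I k w 0 ∧ MemAt Iᶜ w (n - 1) ∧
      ∀ p, 1 ≤ p → ¬ OccursAt I k w p := by
  simp only [Sijk, Set.mem_ofPred_eq, ikFree_iff_forall_not_occursAt, occursAt_take_iff hk,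
    occursAt_drop, not_and]
  constructor
  · rintro ⟨hlen, hfirst, hwk, hlast, hmid⟩
    have h0 : OccursAt I k w 0 := by
      rw [occursAt_iff_forall_mem (by omega), List.drop_zero]; exact hfirst
    refine ⟨hlen, h0, hlast, fun p hp hocc => ?_⟩
    have hpn := hocc.add_le_length hk
    by_cases hpk : p ≤ k
    · exact not_occursAt_of_not_memAt (fun h => h.not_compl hwk) hpk (by omega) hocc
    by_cases hpn' : p + k = n
    · exact not_occursAt_of_not_memAt (fun h => h.not_compl hlast) (by omega) (by omega) hocc
    exact hmid (p - k - 1) (by omega) (by rwa [show k + 1 + (p - k - 1) = p by omega])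
  · rintro ⟨hlen, h0, hlast, hnot⟩
    refine ⟨hlen, ?_, ?_, hlast, fun p hp hocc => hnot _ (by omega) hocc⟩
    · rw [← List.drop_zero (l := w), ← occursAt_iff_forall_mem (by omega)]; exact h0
    · refine memAt_compl_iff.2 ⟨by omega, fun hk' => hnot 1 le_rfl fun t ht => ?_⟩
      rcases Nat.lt_or_ge (1 + t) k with h | h
      · simpa using h0 (1 + t) h
      · rwa [show 1 + t = k by omega]

theorem isCBF_Sijk (hk : 1 ≤ k) (hkn : k < n) : IsCBF (Sijk I Iᶜ k n) := by
  rw [isCBF_iff_forall_not_overlaps]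
  intro u hu v hv
  obtain ⟨-, hu0, -, -⟩ := (mem_Sijk_iff hk hkn).1 hu
  obtain ⟨hvn, -, hv_last, hv⟩ := (mem_Sijk_iff hk hkn).1 hv
  exact not_overlaps_of_occursAt_zero hu0 (hvn ▸ hv_last) hv

theorem append_replicate_mem_Sijk (hk : 1 ≤ k) (hkn : k < n)
    (hy0 : OccursAt I k y 0) (hy : ∀ p, 1 ≤ p → ¬ OccursAt I k y p) (hyn : y.length < n)
    (hj : j ∉ I) : y ++ List.replicate (n - y.length) j ∈ Sijk I Iᶜ k n := by
  have hky := hy0.add_le_length hk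
  refine (mem_Sijk_iff hk hkn).2 ⟨by grind, (occursAt_append_iff hky).2 hy0, ?_,
    fun p hp hocc => ?_⟩
  · rw [memAt_append_of_le (by omega), memAt_replicate]
    exact ⟨by omega, hj⟩
  by_cases hpy : p + k ≤ y.length
  · exact hy p hp ((occursAt_append_iff hpy).1 hocc)
  · refine not_occursAt_of_not_memAt (t := p + k - 1) ?_ (by omega) (by omega) hocc
    rw [memAt_append_of_le (by omega), memAt_replicate]
    exact fun h => hj h.2

theorem exists_overlaps_of_memAt_last (hk : 1 ≤ k) (hkn : k < n) (hx : x.length = n)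
    (hlast : MemAt I x (n - 1)) (hj : j ∉ I) : ∃ u ∈ Sijk I Iᶜ k n, Overlaps u x := by
  obtain ⟨a, ha, hxa⟩ := hlast
  have hmem := append_replicate_mem_Sijk hk hkn (y := List.replicate k a)
    (fun t ht => memAt_replicate.2 ⟨by omega, ha⟩)
    (fun p hp hocc => by have := hocc.add_le_length hk; grind) (by simpa) hj
  have htake : (List.replicate k a ++ List.replicate (n - k) j).take 1 = [a] := by
    obtain ⟨k, rfl⟩ := Nat.exists_eq_add_of_le' hk
    rfl
  have hdrop : x.drop (n - 1) = [a] := by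
    refine List.ext_getElem? fun r => ?_
    rw [List.getElem?_drop]
    rcases r with _ | r
    · exact hxa
    · exact List.getElem?_eq_none (by grind)
  refine ⟨_, hmem, 1, one_pos, by grind, by omega, ?_⟩
  rw [List.length_replicate, htake, hx, hdrop]

theorem exists_overlaps_of_occursAt_pos (hk : 1 ≤ k) (hkn : k < n) (hx : x.length = n)
    {p : ℕ} (hp : 1 ≤ p) (hocc : OccursAt I k x p) (hj : j ∉ I) :
    ∃ u ∈ Sijk I Iᶜ k n, Overlaps u x := by
  classical
  have hpn : p ≤ n := by have := hocc.add_le_length hk; omega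
  set s := Nat.findGreatest (OccursAt I k x) n
  have hs : OccursAt I k x s := Nat.findGreatest_spec hpn hocc
  have hps : p ≤ s := Nat.le_findGreatest hpn hocc
  have hsn : s + k ≤ n := hx ▸ hs.add_le_length hk
  have hmax : ∀ p', s < p' → ¬ OccursAt I k x p' := fun p' hsp' hocc' =>
    Nat.findGreatest_is_greatest hsp' (by have := hocc'.add_le_length hk; omega) hocc'
  have hmem := append_replicate_mem_Sijk hk hkn (y := x.drop s) (j := j) (occursAt_drop.2 hs)
    (fun p' hp' hocc' => hmax _ (by omega) (occursAt_drop.1 hocc')) (by grind) hj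
  refine ⟨_, hmem, n - s, by omega, by grind, by omega, ?_⟩
  rw [List.take_left' (by grind), hx, Nat.sub_sub_self (by omega)]

theorem replicate_append_mem_Sijk_of_succ_eq (hk : 1 ≤ k) (hkn : k + 1 = n)
    (hyn : y.length ≤ n) (hy_init : ∀ t < y.length - 1, MemAt I y t)
    (hy_last : MemAt Iᶜ y (y.length - 1))
    (hi : i ∈ I) : List.replicate (n - y.length) i ++ y ∈ Sijk I Iᶜ k n := by
  have hy1 := hy_last.lt_length
  have hvI : ∀ t < n - 1, MemAt I (List.replicate (n - y.length) i ++ y) t := by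
    intro t ht
    by_cases hty : t < n - y.length
    · exact (memAt_append_of_lt (by simpa)).2 (memAt_replicate.2 ⟨hty, hi⟩)
    · rw [memAt_append_of_le (by grind)]
      exact hy_init _ (by grind)
  have hvlast : MemAt Iᶜ (List.replicate (n - y.length) i ++ y) (n - 1) := by
    rw [memAt_append_of_le (by grind)]
    simpa [show n - 1 - (n - y.length) = y.length - 1 by omega] using hy_last
  refine (mem_Sijk_iff hk (by omega)).2 ⟨by grind, fun t ht => hvI _ (by omega), hvlast,
    fun p hp hocc => ?_⟩
  have := hocc.add_le_length hk
  simp only [List.length_append, List.length_replicate] at this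
  exact not_occursAt_of_not_memAt (fun h => h.not_compl hvlast) (by omega) (by omega) hocc

theorem replicate_append_replicate_append_mem_Sijk (hk : 1 ≤ k) (h2k : 2 * k < n)
    (hy : y.length ≤ k) (hy_last : MemAt Iᶜ y (y.length - 1)) (hi : i ∈ I) (hj : j ∉ I) :
    List.replicate k i ++ List.replicate (n - k - y.length) j ++ y ∈ Sijk I Iᶜ k n := by
  set v := List.replicate k i ++ List.replicate (n - k - y.length) j ++ y
  have hy1 := hy_last.lt_length
  have hvlen : v.length = n := by
    simp only [v, List.length_append, List.length_replicate]; omega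
  have hvI : ∀ t < k, MemAt I v t := fun t ht => by
    rw [memAt_append_of_lt (by grind), memAt_append_of_lt (by simpa)]
    exact memAt_replicate.2 ⟨ht, hi⟩
  have hvJ : ∀ t, k ≤ t → t < n - y.length → ¬ MemAt I v t := fun t hkt htn => by
    rw [memAt_append_of_lt (by grind), memAt_append_of_le (by simpa), memAt_replicate]
    exact fun h => hj h.2
  have hvlast : MemAt Iᶜ v (n - 1) := by
    rw [memAt_append_of_le (by grind)]
    simpa [show n - 1 - (k + (n - k - y.length)) = y.length - 1 by omega] using hy_last
  refine (mem_Sijk_iff hk (by omega)).2 ⟨hvlen, fun t ht => hvI _ (by omega), hvlast,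
    fun p hp hocc => ?_⟩
  have := hocc.add_le_length hk
  by_cases hpy : p < n - y.length
  · exact not_occursAt_of_not_memAt (hvJ (max p k) (by omega) (by omega)) (by omega) (by omega)
      hocc
  · exact not_occursAt_of_not_memAt (fun h => h.not_compl hvlast) (by omega) (by omega) hocc

theorem exists_overlaps_of_not_occursAt_zero (hk : 1 ≤ k) (hcase : k = n - 1 ∨ 2 * k < n)
    (hx : x.length = n) (h0 : ¬ OccursAt I k x 0) (hi : i ∈ I) (hj : j ∉ I) :
    ∃ v ∈ Sijk I Iᶜ k n, Overlaps x v := by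
  obtain ⟨m, hmk, hmin, hm⟩ := exists_first_not_memAt h0
  have hmn : m + 1 < n := by omega
  have hylen : (x.take (m + 1)).length = m + 1 := by grind
  have hy_last : MemAt Iᶜ (x.take (m + 1)) m :=
    (memAt_take_of_lt (by omega)).2 (memAt_compl_iff.2 ⟨by omega, hm⟩)
  rcases hcase with hkn | h2k
  · refine ⟨_, replicate_append_mem_Sijk_of_succ_eq (y := x.take (m + 1)) hk (by omega)
      (by omega) (fun t ht => (memAt_take_of_lt (by omega)).2 (hmin t (by omega)))
      (by simpa [hylen]) hi, overlaps_append_take (by omega) (by omega) (by grind)⟩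
  · refine ⟨_, replicate_append_replicate_append_mem_Sijk (y := x.take (m + 1)) hk h2k
      (by omega) (by simpa [hylen]) hi hj, overlaps_append_take (by omega) (by omega) (by grind)⟩

theorem exists_overlaps_of_not_mem_Sijk (hk : 1 ≤ k) (hkn : k < n)
    (hcase : k = n - 1 ∨ 2 * k < n) (hi : i ∈ I) (hj : j ∉ I) (hx : x.length = n)
    (hxS : x ∉ Sijk I Iᶜ k n) :
    ∃ u ∈ Sijk I Iᶜ k n, Overlaps u x ∨ Overlaps x u := by
  by_cases hlast : MemAt I x (n - 1)
  · obtain ⟨u, hu, hux⟩ := exists_overlaps_of_memAt_last hk hkn hx hlast hj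
    exact ⟨u, hu, .inl hux⟩
  by_cases h0 : OccursAt I k x 0
  · obtain ⟨p, hp, hocc⟩ : ∃ p, 1 ≤ p ∧ OccursAt I k x p := by
      by_contra! h
      exact hxS ((mem_Sijk_iff hk hkn).2 ⟨hx, h0, memAt_compl_iff.2 ⟨by omega, hlast⟩, h⟩)
    obtain ⟨u, hu, hux⟩ := exists_overlaps_of_occursAt_pos hk hkn hx hp hocc hj
    exact ⟨u, hu, .inl hux⟩
  · obtain ⟨v, hv, hxv⟩ := exists_overlaps_of_not_occursAt_zero hk hcase hx h0 hi hj
    exact ⟨v, hv, .inr hxv⟩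

theorem expansionWitness_not_mem_Sijk (hk : 1 ≤ k) (hkn : k + 2 ≤ n) (hi : i ∈ I)
    (hj : j ∉ I) : expansionWitness i j k n ∉ Sijk I Iᶜ k n := fun hx => by
  have := ((mem_Sijk_iff hk (by omega)).1 hx).2.1 (k - 1) (by omega)
  rw [Nat.zero_add, memAt_expansionWitness hk hkn hi hj] at this
  omega

theorem isCBF_Sijk_union_expansionWitness (hk : 3 ≤ k) (hkn : k + 2 ≤ n) (h2k : n ≤ 2 * k)
    (hi : i ∈ I) (hj : j ∉ I) : IsCBF (Sijk I Iᶜ k n ∪ {expansionWitness i j k n}) := by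
  set x := expansionWitness i j k n
  have hlen : x.length = n := length_expansionWitness (by omega) hkn
  have hI : ∀ t, MemAt I x t ↔ t < k - 1 ∨ t = n - 2 :=
    fun t => memAt_expansionWitness (by omega) hkn hi hj
  have hIc : ∀ t, MemAt Iᶜ x t ↔ t < n ∧ ¬ (t < k - 1 ∨ t = n - 2) := fun t => by
    rw [memAt_compl_iff, hlen, hI]
  rw [isCBF_union_singleton_iff]
  refine ⟨isCBF_Sijk (by omega) (by omega), fun hxx => ?_, fun u hu => ⟨?_, fun hxu => ?_⟩⟩
  · obtain ⟨ℓ, hℓ, hℓx, -, hm⟩ := hxx.exists_memAt_iff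
    have h1 := hm Iᶜ (ℓ - 1) (by omega)
    rw [hlen, show n - ℓ + (ℓ - 1) = n - 1 by omega, hIc, hIc] at h1
    have h2 := hm I (ℓ - 2) (by omega)
    rw [hlen, show n - ℓ + (ℓ - 2) = n - 2 by omega, hI, hI] at h2
    have h3 := hm I (k - 3) (by omega)
    rw [hlen, hI, hI] at h3
    omega
  · obtain ⟨-, hu0, -, -⟩ := (mem_Sijk_iff (by omega) (by omega)).1 hu
    refine not_overlaps_of_occursAt_zero hu0 ((hIc _).2 (by omega)) fun p hp hocc => ?_
    have h1 := (hI _).1 (hocc (k - 2) (by omega))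
    have h2 := (hI _).1 (hocc (k - 1) (by omega))
    omega
  · have hu_k : MemAt Iᶜ u k := hu.2.2.1
    obtain ⟨hun, -, hu_last, -⟩ := (mem_Sijk_iff (by omega) (by omega)).1 hu
    obtain ⟨ℓ, hℓ, hℓx, -, hm⟩ := hxu.exists_memAt_iff
    have h1 := (hm Iᶜ (ℓ - 1) (by omega)).2
      (by rwa [hun, show n - ℓ + (ℓ - 1) = n - 1 by omega])
    rw [hIc] at h1
    have h2 := (hm Iᶜ (k + ℓ - n) (by omega)).2
      (by rwa [hun, show n - ℓ + (k + ℓ - n) = k by omega])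
    rw [hIc] at h2
    omega

end Sijk

end CrossBifixFree

open CrossBifixFree

theorem stmt5_general (q n k : ℕ) (hn : 5 ≤ n) (hk1 : 1 ≤ k) (hk2 : k ≤ n - 1)
    (I J : Set (Fin q)) (hIJ : I ∪ J = Set.univ) (hd : I ∩ J = ∅)
    (hI : I.Nonempty) (hJ : J.Nonempty) :
    (∀ x : List (Fin q), x.length = n → x ∉ Sijk I J k n →
        ¬ IsCBF (Sijk I J k n ∪ {x})) ↔ (k = n - 1 ∨ (1 ≤ k ∧ 2 * k < n)) := by
  obtain rfl : J = Iᶜ :=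
    (isCompl_iff.2 ⟨Set.disjoint_iff_inter_eq_empty.2 hd, codisjoint_iff.2 hIJ⟩).compl_eq.symm
  obtain ⟨i, hi⟩ := hI
  obtain ⟨j, hj⟩ := hJ
  constructor
  · intro hnonexp
    by_contra! hcase
    exact hnonexp _ (length_expansionWitness hk1 (by omega))
      (expansionWitness_not_mem_Sijk hk1 (by omega) hi hj)
      (isCBF_Sijk_union_expansionWitness (by omega) (by omega) (by omega) hi hj)
  · rintro hcase x hx hxS hcbf
    obtain ⟨u, hu, hoverlap⟩ :=
      exists_overlaps_of_not_mem_Sijk hk1 (by omega) (hcase.imp_right And.right) hi hj hx hxS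
    obtain ⟨-, -, hS⟩ := isCBF_union_singleton_iff.1 hcbf
    exact hoverlap.elim (hS u hu).1 (hS u hu).2

theorem stmt5 (q n k : ℕ) (hn : 5 ≤ n) (hq : 1 < q) (hk1 : 1 ≤ k) (hk2 : k ≤ n - 1)
    (I J : Set (Fin q)) (hIJ : I ∪ J = Set.univ) (hd : I ∩ J = ∅)
    (hI : I.Nonempty) (hJ : J.Nonempty) :
    (∀ x : List (Fin q), x.length = n → x ∉ Sijk I J k n →
        ¬ IsCBF (Sijk I J k n ∪ {x})) ↔ (k = n - 1 ∨ (1 ≤ k ∧ 2 * k < n)) :=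
  stmt5_general q n k hn hk1 hk2 I J hIJ hd hI hJ
end

section
/- Let n ≥ 5 and q > 1. The binary-type code S_q^{(k)}(n) (all words starting with k zeros, with nonzero (k+1)-th and n-th coordinates, and whose middle part from position k+2 to n-1 contains no k consecutive zeros) is a non-expandable cross-bifix-free code if and only if k = n-1 or 1 ≤ k < n/2. -/
open List

private lemma gelem_congr {α : Type*} (l : List α) {i j : ℕ} (hij : i = j) (hi : i < l.length) :
    l[i] = l[j]'(hij ▸ hi) := by subst hij; rfl

private lemma val_congr {q : ℕ} (l : List (Fin q)) {i j : ℕ} (hij : i = j) (hi : i < l.length) :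
    (l[i]).val = (l[j]'(hij ▸ hi)).val := by subst hij; rfl

/-- words built from an index function -/
private def wd {q : ℕ} (n : ℕ) (g : ℕ → Fin q) : List (Fin q) :=
  List.ofFn (fun i : Fin n => g i.val)

private lemma wd_length {q n : ℕ} (g : ℕ → Fin q) : (wd n g).length = n := by
  simp [wd]

private lemma wd_get {q n : ℕ} (g : ℕ → Fin q) (i : ℕ) (h : i < n) :
    (wd n g)[i]'(by rw [wd_length]; exact h) = g i := by
  unfold wd
  rw [List.getElem_ofFn]

private lemma run_iff {q k n : ℕ} (hk1 : 1 ≤ k) {w : List (Fin q)} (hw : w.length = n) :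
    IkFree {x : Fin q | x.val = 0} k ((w.drop (k+1)).take (n - k - 2)) ↔
      ¬ ∃ p, k + 1 ≤ p ∧ p + k ≤ n - 1 ∧
        ∀ i, ∀ _h : p + i < w.length, i < k → (w[p+i]).val = 0 := by
  obtain ⟨m, hmeq⟩ : ∃ m, (w.drop (k+1)).take (n - k - 2) = m := ⟨_, rfl⟩
  have hmidlen : m.length = n - k - 2 := by
    rw [← hmeq, List.length_take, List.length_drop, hw]; omega
  have hmid : ∀ j, ∀ _hj : j < n - k - 2,
      (m[j]'(by omega)) = w[k+1+j]'(by omega) := by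
    intro j hj
    subst hmeq
    rw [List.getElem_take, List.getElem_drop]
  unfold IkFree
  rw [hmeq]
  apply not_congr
  constructor
  · rintro ⟨y, ⟨s, t, hst⟩, hlen, hall⟩
    subst hst
    have hlen2 : s.length + y.length + t.length = n - k - 2 := by
      have h0 := hmidlen
      simp only [List.length_append] at h0
      omega
    refine ⟨k+1+s.length, by omega, by omega, ?_⟩
    intro i hb hik
    have hiy : i < y.length := by omega
    have h5 : y[i] ∈ {x : Fin q | x.val = 0} := hall _ (List.getElem_mem hiy)
    have e1 : (s ++ y ++ t)[s.length + i]'(by simp [List.length_append]; omega) = y[i] := by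
      have f1 : (s ++ y ++ t)[s.length + i]'(by simp [List.length_append]; omega) =
          (s ++ y)[s.length + i]'(by simp [List.length_append]; omega) :=
        List.getElem_append_left (by simp [List.length_append]; omega)
      have f2 : (s ++ y)[s.length + i]'(by simp [List.length_append]; omega) =
          y[s.length + i - s.length]'(by omega) :=
        List.getElem_append_right (by omega)
      have f3 : y[s.length + i - s.length]'(by omega) = y[i]'hiy :=
        gelem_congr y (by omega) _
      exact (f1.trans f2).trans f3
    have e2 := hmid (s.length + i) (by omega)
    have e3 : (w[k+1+(s.length+i)]'(by omega)) = w[k+1+s.length+i]'(by omega) :=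
      gelem_congr w (by omega) _
    have : (w[k+1+s.length+i]'(by omega)).val = 0 := by
      rw [← e3, ← e2, e1]; exact h5
    exact this
  · rintro ⟨p, hp1, hp2, hz⟩
    have hkn : 2*k + 2 ≤ n := by omega
    refine ⟨(m.drop (p-k-1)).take k, ?_, ?_, ?_⟩
    · exact ((List.take_prefix _ _).isInfix).trans ((List.drop_suffix _ _).isInfix)
    · rw [List.length_take, List.length_drop, hmidlen]; omega
    · intro a ha
      obtain ⟨i, hb, rfl⟩ := List.mem_iff_getElem.mp ha
      have hb' : i < k := by
        rw [List.length_take] at hb; omega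
      have hbm : p - k - 1 + i < m.length := by
        rw [List.length_take, List.length_drop, hmidlen] at hb; omega
      show (((m.drop (p-k-1)).take k)[i]'hb).val = 0
      have e1 : ((m.drop (p-k-1)).take k)[i]'hb = m[p-k-1+i]'hbm := by
        rw [List.getElem_take, List.getElem_drop]
      have e2 := hmid (p-k-1+i) (by omega)
      have e3 : (w[k+1+(p-k-1+i)]'(by omega)) = w[p+i]'(by omega) :=
        gelem_congr w (by omega) _
      rw [e1, e2, e3]
      exact hz i (by omega) hb'

private lemma mem_sq_iff {q k n : ℕ} {w : List (Fin q)} (hw : w.length = n)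
    (hk1 : 1 ≤ k) (hkn : k ≤ n - 1) (hn : 5 ≤ n) :
    w ∈ SqCode q k n ↔
      ((∀ i, ∀ _h : i < w.length, i < k → (w[i]).val = 0) ∧
       (∀ _h : k < w.length, (w[k]).val ≠ 0) ∧
       (∀ _h : n - 1 < w.length, (w[n-1]).val ≠ 0) ∧
       ¬ ∃ p, k + 1 ≤ p ∧ p + k ≤ n - 1 ∧
          ∀ i, ∀ _h : p + i < w.length, i < k → (w[p+i]).val = 0) := by
  unfold SqCode Sijk
  rw [Set.mem_setOf_eq]
  constructor
  · rintro ⟨-, h1, h2, h3, h4⟩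
    refine ⟨?_, ?_, ?_, (run_iff hk1 hw).mp h4⟩
    · intro i hb hik
      have hbt : i < (w.take k).length := by rw [List.length_take]; omega
      have h5 := h1 _ (List.getElem_mem hbt)
      rwa [List.getElem_take] at h5
    · intro hb
      obtain ⟨a, ha, hk'⟩ := h2
      obtain ⟨hb', rfl⟩ := List.getElem?_eq_some_iff.mp hk'
      exact ha
    · intro hb
      obtain ⟨a, ha, hk'⟩ := h3
      obtain ⟨hb', rfl⟩ := List.getElem?_eq_some_iff.mp hk'
      exact ha
  · rintro ⟨h1, h2, h3, h4⟩
    refine ⟨hw, ?_, ?_, ?_, (run_iff hk1 hw).mpr h4⟩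
    · intro a ha
      obtain ⟨i, hb, rfl⟩ := List.mem_iff_getElem.mp ha
      have hbk : i < k := by rw [List.length_take] at hb; omega
      have hbw : i < w.length := by rw [List.length_take] at hb; omega
      rw [List.getElem_take]
      exact h1 i hbw hbk
    · exact ⟨w[k]'(by omega), h2 (by omega), List.getElem?_eq_getElem (by omega)⟩
    · exact ⟨w[n-1]'(by omega), h3 (by omega), List.getElem?_eq_getElem (by omega)⟩

/-- membership of constructed words -/
private lemma wd_mem {q k n : ℕ} (hn : 5 ≤ n) (hk1 : 1 ≤ k) (hkn : k ≤ n-1) (g : ℕ → Fin q)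
    (h1 : ∀ i, i < k → (g i).val = 0) (h2 : (g k).val ≠ 0) (h3 : (g (n-1)).val ≠ 0)
    (h4 : ∀ p, k+1 ≤ p → p + k ≤ n-1 → (∀ i, i < k → (g (p+i)).val = 0) → False) :
    wd n g ∈ SqCode q k n := by
  rw [mem_sq_iff (wd_length g) hk1 hkn hn]
  refine ⟨?_, ?_, ?_, ?_⟩
  · intro i hb hik
    have hb' : i < n := by rw [wd_length] at hb; exact hb
    rw [wd_get g i hb']
    exact h1 i hik
  · intro hb
    rw [wd_get g k (by omega)]
    exact h2
  · intro hb
    rw [wd_get g (n-1) (by omega)]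
    exact h3
  · rintro ⟨p, hp1, hp2, hz⟩
    apply h4 p hp1 hp2
    intro i hik
    have h5 := hz i (by rw [wd_length]; omega) hik
    rwa [wd_get g (p+i) (by omega)] at h5

private lemma length_of_mem {q k n : ℕ} {w : List (Fin q)} (h : w ∈ SqCode q k n) :
    w.length = n := by
  unfold SqCode Sijk at h
  exact h.1

/-- The code is always cross-bifix-free for `1 ≤ k ≤ n-1`. -/
private lemma cbf_sq {q k n : ℕ} (hn : 5 ≤ n) (hk1 : 1 ≤ k) (hkn : k ≤ n - 1) :
    IsCBF (SqCode q k n) := by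
  rintro u hu v hv w hne hwu hwv ⟨hpre, hsuf⟩
  have hul : u.length = n := length_of_mem hu
  have hvl : v.length = n := length_of_mem hv
  rw [mem_sq_iff hul hk1 hkn hn] at hu
  rw [mem_sq_iff hvl hk1 hkn hn] at hv
  obtain ⟨hu1, hu2, hu3, hu4⟩ := hu
  obtain ⟨hv1, hv2, hv3, hv4⟩ := hv
  have hl1 : 0 < w.length := List.length_pos_iff.mpr hne
  have hln : w.length < n := by omega
  rcases le_or_gt w.length k with hc | hc
  · -- short prefix: all zeros, but suffix ends nonzero
    have h1 := hpre.getElem (show w.length - 1 < w.length by omega)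
    have h2 := hsuf.getElem (show w.length - 1 < w.length by omega)
    apply hv3 (by omega)
    have e1 : (v[v.length - w.length + (w.length-1)]'(by omega)).val = 0 := by
      rw [← h2, h1]
      exact hu1 _ (by omega) (by omega)
    exact (val_congr v (show (n:ℕ)-1 = v.length - w.length + (w.length-1) by omega) (by omega)).trans e1
  · -- long prefix
    have hz : ∀ i, ∀ hik : i < k, (v[v.length - w.length + i]'(by omega)).val = 0 := by
      intro i hik
      have h2 := hsuf.getElem (show i < w.length by omega)
      rw [← h2, hpre.getElem (show i < w.length by omega)]
      exact hu1 i (by omega) hik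
    rcases le_or_gt (n - w.length) k with hd | hd
    · -- the zeros cover position k of v
      apply hv2 (by omega)
      have e1 := hz (k - (n - w.length)) (by omega)
      exact (val_congr v (show (k:ℕ) = v.length - w.length + (k - (n - w.length)) by omega)
        (by omega)).trans e1
    · -- the zeros form a run in the middle of v
      apply hv4
      refine ⟨n - w.length, by omega, by omega, ?_⟩
      intro i hb hik
      have e1 := hz i hik
      exact (val_congr v (show n - w.length + i = v.length - w.length + i by omega)
        (by omega)).trans e1

/-- find a "pattern" (k zeros followed by a nonzero) after a given zero-run. -/
private lemma pattern_of_run {q k n : ℕ} (hk1 : 1 ≤ k) (hn1 : 1 ≤ n) {x : List (Fin q)}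
    (hx : x.length = n)
    (hlast : (x[n-1]'(by omega : n - 1 < x.length) ).val ≠ 0)
    {p : ℕ} (hp1 : 1 ≤ p) (hp2 : p + k ≤ n - 1)
    (hz : ∀ i, i < k → ∀ _h : p + i < x.length, (x[p+i]).val = 0) :
    ∃ e, p + k ≤ e ∧ e ≤ n - 1 ∧ (∀ _h : e < x.length, (x[e]).val ≠ 0) ∧
      (∀ i, i < k → ∀ _h : e - k + i < x.length, (x[e-k+i]).val = 0) := by
  classical
  have hex : ∃ m, p + k ≤ m ∧ m ≤ n-1 ∧ ∀ _h : m < x.length, (x[m]).val ≠ 0 :=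
    ⟨n-1, hp2, le_refl _, fun _ => hlast⟩
  obtain ⟨he1, he2, he3⟩ := Nat.find_spec hex
  refine ⟨Nat.find hex, he1, he2, he3, ?_⟩
  intro i hik hb
  rcases lt_or_ge (Nat.find hex - k + i) (p + k) with hcase | hcase
  · have heq : Nat.find hex - k + i = p + (Nat.find hex - k + i - p) := by omega
    exact (val_congr x heq (by omega)).trans (hz _ (by omega) (by omega))
  · by_contra hne0
    have hlt : Nat.find hex - k + i < Nat.find hex := by omega
    exact Nat.find_min hex hlt ⟨hcase, by omega, fun _ => hne0⟩

private lemma not_cbf_insert {q k n : ℕ} (hn : 5 ≤ n) (hq : 1 < q) (hk1 : 1 ≤ k)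
    (hkn : k ≤ n - 1) (hcond : k = n - 1 ∨ 2 * k < n) (x : List (Fin q)) (hx : x.length = n)
    (hxn : x ∉ SqCode q k n) : ¬ IsCBF (SqCode q k n ∪ {x}) := by
  classical
  intro hcbf
  have hq0 : 0 < q := by omega
  have hxmem : x ∈ SqCode q k n ∪ {x} := Set.mem_union_right _ rfl
  by_cases hA : (x[n-1]'(by omega)).val = 0
  · -- x ends with zero : [0] is a suffix of x and a prefix of a codeword
    have hcmem : wd n (fun j => if j < k then (⟨0, hq0⟩ : Fin q) else ⟨1, hq⟩) ∈ SqCode q k n := by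
      apply wd_mem hn hk1 hkn
      · intro i hik; rw [if_pos hik]
      · rw [if_neg (by omega)]; exact Nat.one_ne_zero
      · rw [if_neg (by omega)]; exact Nat.one_ne_zero
      · intro p hp1 hp2 hzz
        have h5 := hzz 0 (by omega)
        rw [if_neg (by omega)] at h5
        exact Nat.one_ne_zero h5
    have hwl : (x.drop (n-1)).length = 1 := by rw [List.length_drop]; omega
    have hwpre : x.drop (n-1) <+: wd n (fun j => if j < k then (⟨0, hq0⟩ : Fin q) else ⟨1, hq⟩) := by
      rw [List.prefix_iff_eq_take]
      apply List.ext_getElem (by rw [hwl, List.length_take, wd_length]; omega)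
      intro i h1 h2
      have hi0 : i = 0 := by rw [hwl] at h1; omega
      subst hi0
      rw [List.getElem_take, List.getElem_drop, wd_get _ 0 (by omega), if_pos (by omega)]
      apply Fin.ext
      exact (val_congr x (show n-1+0 = n-1 by omega) (by omega)).trans hA
    apply hcbf _ (Set.mem_union_left _ hcmem) x hxmem (x.drop (n-1))
      (by intro hh; rw [hh] at hwl; simp at hwl)
      (by rw [hwl, wd_length]; omega) (by rw [hwl, hx]; omega)
    exact ⟨hwpre, List.drop_suffix _ _⟩
  · by_cases hB : (x[0]'(by omega)).val = 0
    · -- main case : x starts with zero, ends with nonzero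
      have hex : ∃ j, ∃ _h : j < x.length, (x[j]).val ≠ 0 := ⟨n-1, by omega, hA⟩
      have hjspec := Nat.find_spec hex
      obtain ⟨hjb, hjnz⟩ := hjspec
      have hjmin : ∀ i, i < Nat.find hex → ∀ _h : i < x.length, (x[i]).val = 0 := by
        intro i hij hb
        by_contra hne
        exact Nat.find_min hex hij ⟨hb, hne⟩
      have hj1 : 1 ≤ Nat.find hex := by
        rcases Nat.eq_zero_or_pos (Nat.find hex) with h0 | h0
        · exfalso; apply hjnz
          exact (val_congr x (by omega) (by omega)).symm.trans hB
        · exact h0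
      have hjn : Nat.find hex ≤ n - 1 := Nat.find_min' hex ⟨by omega, hA⟩
      set j := Nat.find hex with hjdef
      by_cases hjk : j < k
      · -- x starts with fewer than k zeros : 0^j a is a suffix of a codeword
        set g : ℕ → Fin q := fun i =>
          if i < k then (⟨0, hq0⟩ : Fin q)
          else if n-1-j ≤ i ∧ i < n-1 then ⟨0, hq0⟩
          else if i = n-1 then x[j]'(by omega) else ⟨1, hq⟩ with hg
        have hcmem : wd n g ∈ SqCode q k n := by
          apply wd_mem hn hk1 hkn
          · intro i hik; rw [hg]; beta_reduce; rw [if_pos hik]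
          · rw [hg]; beta_reduce
            rw [if_neg (by omega), if_neg (by omega)]
            by_cases hkn1 : k = n-1
            · rw [if_pos hkn1]; exact hjnz
            · rw [if_neg hkn1]; exact Nat.one_ne_zero
          · rw [hg]; beta_reduce
            rw [if_neg (by omega), if_neg (by omega), if_pos (show n - 1 = n - 1 from rfl)]
            exact hjnz
          · intro p hp1 hp2 hzz
            have h5 := hzz 0 (by omega)
            rw [hg] at h5; beta_reduce at h5
            rw [if_neg (by omega), if_neg (by omega), if_neg (by omega)] at h5
            exact Nat.one_ne_zero h5
        have hwl : (x.take (j+1)).length = j+1 := by rw [List.length_take]; omega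
        have hwsuf : x.take (j+1) <:+ wd n g := by
          rw [List.suffix_iff_eq_drop]
          apply List.ext_getElem (by rw [hwl, List.length_drop, wd_length]; omega)
          intro i h1 h2
          have hi : i < j + 1 := by rw [hwl] at h1; omega
          rw [List.getElem_take, List.getElem_drop]
          have hidx : (wd n g).length - (x.take (j+1)).length + i = n - (j+1) + i := by
            rw [wd_length, hwl]
          rw [gelem_congr (wd n g) hidx, wd_get g (n-(j+1)+i) (by omega)]
          rcases Nat.lt_or_ge i j with hij | hij
          · -- zero zone
            apply Fin.ext
            rw [hjmin i (by omega) (by omega)]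
            rw [hg]; beta_reduce
            by_cases hz1 : n-(j+1)+i < k
            · rw [if_pos hz1]
            · rw [if_neg hz1, if_pos (by omega)]
          · have hij' : i = j := by omega
            rw [hg]; beta_reduce
            rw [if_neg (by omega), if_neg (by omega), if_pos (show n-(j+1)+i = n-1 by omega)]
            exact gelem_congr x (by omega) _
        apply hcbf x hxmem _ (Set.mem_union_left _ hcmem) (x.take (j+1))
          (by intro hh; rw [hh] at hwl; simp at hwl)
          (by rw [hwl, hx]; omega) (by rw [hwl, wd_length]; omega)
        exact ⟨List.take_prefix _ _, hwsuf⟩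
      · -- x starts with at least k zeros
        have hallk : ∀ i, i < k → ∀ _h : i < x.length, (x[i]).val = 0 := by
          intro i hik hb
          exact hjmin i (by omega) hb
        have h2k : 2*k < n := by
          rcases hcond with hcase | hcase
          · exfalso
            apply hxn
            rw [mem_sq_iff hx hk1 hkn hn]
            refine ⟨fun i hb hik => hallk i hik hb, ?_, fun _ => hA, ?_⟩
            · intro hb
              intro hzero
              apply hA
              exact (val_congr x (show n-1 = k by omega) (by omega)).trans hzero
            · rintro ⟨p, hp1, hp2, -⟩
              omega
          · exact hcase
        -- obtain an initial zero-run
        obtain ⟨p₀, hp01, hp02, hp0z⟩ :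
            ∃ p, 1 ≤ p ∧ p + k ≤ n-1 ∧ ∀ i, i < k → ∀ _h : p+i < x.length, (x[p+i]).val = 0 := by
          by_cases hxk : (x[k]'(by omega)).val = 0
          · refine ⟨1, le_refl _, by omega, ?_⟩
            intro i hik hb
            rcases Nat.lt_or_ge (1+i) k with hik' | hik'
            · exact hallk (1+i) hik' hb
            · have : 1 + i = k := by omega
              exact (val_congr x this (by omega)).trans hxk
          · have hnotrun : ¬¬ ∃ p, k + 1 ≤ p ∧ p + k ≤ n - 1 ∧
                ∀ i, ∀ _h : p + i < x.length, i < k → (x[p+i]).val = 0 := by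
              intro hD
              apply hxn
              rw [mem_sq_iff hx hk1 hkn hn]
              exact ⟨fun i hb hik => hallk i hik hb, fun _ => hxk, fun _ => hA, hD⟩
            obtain ⟨p, hp1, hp2, hpz⟩ := not_not.mp hnotrun
            exact ⟨p, by omega, hp2, fun i hik hb => hpz i hb hik⟩
        obtain ⟨e0, he01, he02, he03, he04⟩ :=
          pattern_of_run hk1 (by omega) hx hA hp01 hp02 hp0z
        set P : ℕ → Prop := fun e => k+1 ≤ e ∧ (∀ _h : e < x.length, (x[e]).val ≠ 0) ∧
          (∀ i, i < k → ∀ _h : e-k+i < x.length, (x[e-k+i]).val = 0) with hP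
        have hPe0 : P e0 := ⟨by omega, he03, he04⟩
        set E := Nat.findGreatest P (n-1) with hE
        have hPE : P E := Nat.findGreatest_spec (m := e0) (by omega) hPe0
        have hEn : E ≤ n-1 := Nat.findGreatest_le _
        obtain ⟨hE1, hE2, hE3⟩ := hPE
        set g : ℕ → Fin q := fun i =>
          if i < k then (⟨0, hq0⟩ : Fin q)
          else if i = k then (x[E]?).getD ⟨0, hq0⟩
          else if i ≤ k + (n-1-E) then (x[E + (i - k)]?).getD ⟨0, hq0⟩
          else ⟨1, hq⟩ with hg
        have hgetD : ∀ m, ∀ _h : m < x.length, (x[m]?).getD (⟨0, hq0⟩ : Fin q) = x[m] := by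
          intro m hb
          rw [List.getElem?_eq_getElem hb]
          rfl
        have hcmem : wd n g ∈ SqCode q k n := by
          apply wd_mem hn hk1 hkn
          · intro i hik; rw [hg]; beta_reduce; rw [if_pos hik]
          · rw [hg]; beta_reduce
            rw [if_neg (by omega), if_pos (show k = k from rfl), hgetD E (by omega)]
            exact hE2 (by omega)
          · rw [hg]; beta_reduce
            rw [if_neg (by omega), if_neg (by omega), if_neg (by omega)]
            exact Nat.one_ne_zero
          · intro p hp1 hp2 hzz
            by_cases hcc : p + E ≤ n
            · -- run lies inside the copied part of x : get a later pattern, contradiction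
              exfalso
              have hrz : ∀ i, i < k → ∀ _h : E + p - k + i < x.length, (x[E+p-k+i]).val = 0 := by
                intro i hik hb
                have h5 := hzz i (by omega)
                rw [hg] at h5; beta_reduce at h5
                rw [if_neg (by omega), if_neg (by omega), if_pos (by omega),
                  hgetD (E + (p+i-k)) (by omega)] at h5
                exact (val_congr x (show E+p-k+i = E + (p+i-k) by omega) (by omega)).trans h5
              have hrk : E + p - k + k ≤ n - 1 := by
                by_contra hh
                apply hA
                have h9 := hrz (k-1) (by omega) (by omega)
                exact (val_congr x (show n-1 = E+p-k+(k-1) by omega) (by omega)).trans h9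
              obtain ⟨e', he1', he2', he3', he4'⟩ :=
                pattern_of_run hk1 (by omega) hx hA (p := E+p-k) (by omega) hrk hrz
              exact Nat.findGreatest_is_greatest (show Nat.findGreatest P (n-1) < e' by omega)
                he2' ⟨by omega, he3', he4'⟩
            · -- run would hit the padding ones
              have h5 := hzz (k-1) (by omega)
              rw [hg] at h5; beta_reduce at h5
              rw [if_neg (by omega), if_neg (by omega), if_neg (by omega)] at h5
              exact Nat.one_ne_zero h5
        -- w = x.drop (E - k) is a suffix of x and a prefix of wd n g
        have hwl : (x.drop (E-k)).length = n - (E-k) := by rw [List.length_drop, hx]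
        have hwpre : x.drop (E-k) <+: wd n g := by
          rw [List.prefix_iff_eq_take]
          apply List.ext_getElem (by rw [hwl, List.length_take, wd_length]; omega)
          intro i h1 h2
          have hi : i < n - (E-k) := by rw [hwl] at h1; omega
          rw [List.getElem_drop, List.getElem_take, wd_get g i (by omega)]
          rw [hg]; beta_reduce
          rcases Nat.lt_or_ge i k with hik | hik
          · rw [if_pos hik]
            apply Fin.ext
            exact hE3 i hik (by omega)
          · rcases Nat.eq_or_lt_of_le hik with hik' | hik'
            · rw [if_neg (by omega), if_pos hik'.symm, hgetD E (by omega)]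
              exact gelem_congr x (by omega) _
            · rw [if_neg (by omega), if_neg (by omega), if_pos (by omega),
                hgetD (E + (i-k)) (by omega)]
              exact gelem_congr x (by omega) _
        apply hcbf _ (Set.mem_union_left _ hcmem) x hxmem (x.drop (E-k))
          (by intro hh; rw [hh] at hwl; simp at hwl; omega)
          (by rw [hwl, wd_length]; omega) (by rw [hwl, hx]; omega)
        exact ⟨hwpre, List.drop_suffix _ _⟩
    · -- x starts with a nonzero : [x 0] is a prefix of x and a suffix of a codeword
      set g : ℕ → Fin q := fun i =>
        if i < k then (⟨0, hq0⟩ : Fin q)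
        else if i = n-1 then x[0]'(by omega) else ⟨1, hq⟩ with hg
      have hcmem : wd n g ∈ SqCode q k n := by
        apply wd_mem hn hk1 hkn
        · intro i hik; rw [hg]; beta_reduce; rw [if_pos hik]
        · rw [hg]; beta_reduce
          rw [if_neg (by omega)]
          by_cases hkn1 : k = n-1
          · rw [if_pos hkn1]; exact hB
          · rw [if_neg hkn1]; exact Nat.one_ne_zero
        · rw [hg]; beta_reduce
          rw [if_neg (by omega), if_pos (show n - 1 = n - 1 from rfl)]
          exact hB
        · intro p hp1 hp2 hzz
          have h5 := hzz 0 (by omega)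
          rw [hg] at h5; beta_reduce at h5
          rw [if_neg (by omega), if_neg (by omega)] at h5
          exact Nat.one_ne_zero h5
      have hwl : (x.take 1).length = 1 := by rw [List.length_take]; omega
      have hwsuf : x.take 1 <:+ wd n g := by
        rw [List.suffix_iff_eq_drop]
        apply List.ext_getElem (by rw [hwl, List.length_drop, wd_length]; omega)
        intro i h1 h2
        have hi0 : i = 0 := by rw [hwl] at h1; omega
        subst hi0
        rw [List.getElem_take, List.getElem_drop]
        have hidx : (wd n g).length - (x.take 1).length + 0 = n - 1 := by
          rw [wd_length, hwl]; omega
        rw [gelem_congr (wd n g) hidx, wd_get g (n-1) (by omega)]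
        rw [hg]; beta_reduce
        rw [if_neg (by omega), if_pos (show n - 1 = n - 1 from rfl)]
      apply hcbf x hxmem _ (Set.mem_union_left _ hcmem) (x.take 1)
        (by intro hh; rw [hh] at hwl; simp at hwl)
        (by rw [hwl, hx]; omega) (by rw [hwl, wd_length]; omega)
      exact ⟨List.take_prefix _ _, hwsuf⟩

/-- In the regime n/2 ≤ k ≤ n-2 the code is expandable. -/
private lemma expand_sq {q k n : ℕ} (hn : 5 ≤ n) (hq : 1 < q) (hk3 : 3 ≤ k) (hkn : k ≤ n-2)
    (h2k : n ≤ 2*k) :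
    ∃ x : List (Fin q), x.length = n ∧ x ∉ SqCode q k n ∧ IsCBF (SqCode q k n ∪ {x}) := by
  have hq0 : 0 < q := by omega
  have hk1 : 1 ≤ k := by omega
  have hkn1 : k ≤ n-1 := by omega
  set g : ℕ → Fin q := fun i =>
    if i < k-1 then (⟨0, hq0⟩ : Fin q) else if i = n-2 then ⟨0, hq0⟩ else ⟨1, hq⟩ with hg
  refine ⟨wd n g, wd_length g, ?_, ?_⟩
  · -- not in the code
    intro hmem
    rw [mem_sq_iff (wd_length g) hk1 hkn1 hn] at hmem
    have h5 := hmem.1 (k-1) (by rw [wd_length]; omega) (by omega)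
    rw [wd_get g (k-1) (by omega)] at h5
    rw [hg] at h5; beta_reduce at h5
    rw [if_neg (by omega), if_neg (by omega)] at h5
    exact Nat.one_ne_zero h5
  · -- union is still CBF
    have hval : ∀ i, i < n → ((i < k-1 ∨ i = n-2) → (g i).val = 0) ∧
        (¬(i < k-1 ∨ i = n-2) → (g i).val = 1) := by
      intro i hi
      constructor
      · intro hcase
        rw [hg]; beta_reduce
        rcases hcase with h | h
        · rw [if_pos h]
        · by_cases h1 : i < k-1
          · rw [if_pos h1]
          · rw [if_neg h1, if_pos h]
      · intro hcase
        rw [hg]; beta_reduce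
        rw [if_neg (by omega), if_neg (by omega)]
    rintro u hu v hv w hne hwu hwv ⟨hpre, hsuf⟩
    have hl1 : 0 < w.length := List.length_pos_iff.mpr hne
    rw [Set.mem_union, Set.mem_singleton_iff] at hu hv
    -- getElem values of x := wd n g
    have hxg : ∀ i, ∀ _h : i < n, ((wd n g)[i]'(by rw [wd_length]; omega)).val =
        (if i < k-1 ∨ i = n-2 then 0 else 1) := by
      intro i hi
      rw [wd_get g i hi]
      by_cases hc : i < k-1 ∨ i = n-2
      · rw [if_pos hc]; exact (hval i hi).1 hc
      · rw [if_neg hc]; exact (hval i hi).2 hc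
    rcases hu with hu | hux
    · rcases hv with hv | hvx
      · exact cbf_sq hn hk1 hkn1 u hu v hv w hne hwu hwv ⟨hpre, hsuf⟩
      · -- u ∈ C, v = x : w is a prefix of a codeword u and a suffix of x
        subst hvx
        have hul : u.length = n := length_of_mem hu
        rw [mem_sq_iff hul hk1 hkn1 hn] at hu
        obtain ⟨hu1, hu2, hu3, hu4⟩ := hu
        have hln : w.length < n := by rw [wd_length] at hwv; exact hwv
        rcases le_or_gt w.length k with hc | hc
        · -- w = 0^ℓ but x ends with 1
          have h1 := hpre.getElem (show w.length - 1 < w.length by omega)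
          have h2 := hsuf.getElem (show w.length - 1 < w.length by omega)
          have e1 : (w[w.length-1]'(by omega)).val = 0 := by
            rw [h1]; exact hu1 _ (by omega) (by omega)
          have e2 : (w[w.length-1]'(by omega)).val = 1 := by
            rw [h2]
            have hidx : (wd n g).length - w.length + (w.length-1) = n-1 := by
              rw [wd_length]; omega
            rw [val_congr (wd n g) hidx (by omega)]
            rw [hxg (n-1) (by omega), if_neg (by omega)]
          omega
        · -- 0^k-followed-by-nonzero can't be a factor of x ending at a position ≥ k
          have hzero : ∀ i, ∀ hik : i < k, ((wd n g)[(wd n g).length - w.length + i]'(by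
              rw [wd_length]; omega)).val = 0 := by
            intro i hik
            have h2 := hsuf.getElem (show i < w.length by omega)
            rw [← h2, hpre.getElem (show i < w.length by omega)]
            exact hu1 i (by omega) hik
          have h5 := hzero (k-1 - ((wd n g).length - w.length)) (by rw [wd_length]; omega)
          have hidx : (wd n g).length - w.length + (k-1 - ((wd n g).length - w.length)) = k-1 := by
            rw [wd_length]; rw [wd_length] at hwv; omega
          rw [val_congr (wd n g) hidx (by rw [wd_length]; omega)] at h5
          rw [hxg (k-1) (by omega), if_neg (by omega)] at h5
          exact Nat.one_ne_zero h5
    · subst hux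
      have hln : w.length < n := by rw [wd_length] at hwu; exact hwu
      rcases hv with hv | hvx
      · -- u = x, v ∈ C : w is a prefix of x and a suffix of a codeword v
        have hvl : v.length = n := length_of_mem hv
        rw [mem_sq_iff hvl hk1 hkn1 hn] at hv
        obtain ⟨hv1, hv2, hv3, hv4⟩ := hv
        rcases le_or_gt w.length (k-1) with hc | hc
        · -- w = 0^ℓ but codewords end with nonzero
          have h1 := hpre.getElem (show w.length - 1 < w.length by omega)
          have h2 := hsuf.getElem (show w.length - 1 < w.length by omega)
          apply hv3 (by omega)
          have e1 : (w[w.length-1]'(by omega)).val = 0 := by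
            rw [h1, hxg (w.length-1) (by omega), if_pos (by omega)]
          have e3 : (v[v.length - w.length + (w.length-1)]'(by omega)).val = 0 := by
            rw [← h2]; exact e1
          exact (val_congr v (show (n:ℕ)-1 = v.length - w.length + (w.length-1) by omega)
            (by omega)).trans e3
        · rcases eq_or_lt_of_le (show w.length ≤ n-1 by omega) with hc2 | hc2
          · -- ℓ = n-1 : w ends with x[n-2] = 0 but codewords end nonzero
            have h1 := hpre.getElem (show w.length - 1 < w.length by omega)
            have h2 := hsuf.getElem (show w.length - 1 < w.length by omega)
            apply hv3 (by omega)
            have e1 : (w[w.length-1]'(by omega)).val = 0 := by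
              rw [h1, val_congr (wd n g) (show w.length-1 = n-2 by omega) (by rw [wd_length]; omega)]
              rw [hxg (n-2) (by omega), if_pos (by omega)]
            have e3 : (v[v.length - w.length + (w.length-1)]'(by omega)).val = 0 := by
              rw [← h2]; exact e1
            exact (val_congr v (show (n:ℕ)-1 = v.length - w.length + (w.length-1) by omega)
              (by omega)).trans e3
          · -- k ≤ ℓ ≤ n-2
            have hc3 : n - w.length ≤ k := by omega
            apply hv2 (by omega)
            have h1 := hpre.getElem (show k - (n - w.length) < w.length by omega)
            have h2 := hsuf.getElem (show k - (n - w.length) < w.length by omega)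
            have e1 : (w[k - (n - w.length)]'(by omega)).val = 0 := by
              rw [h1, hxg (k - (n - w.length)) (by omega), if_pos (by left; omega)]
            have e3 : (v[v.length - w.length + (k - (n - w.length))]'(by omega)).val = 0 := by
              rw [← h2]; exact e1
            exact (val_congr v (show (k:ℕ) = v.length - w.length + (k - (n-w.length)) by omega)
              (by omega)).trans e3
      · -- u = v = x : w would be a bifix of x
        subst hvx
        have h1 := hpre.getElem (show w.length - 1 < w.length by omega)
        have h2 := hsuf.getElem (show w.length - 1 < w.length by omega)
        have e1 : (w[w.length-1]'(by omega)).val = 1 := by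
          rw [h2, val_congr (wd n g) (show (wd n g).length - w.length + (w.length-1) = n-1 by
            rw [wd_length]; omega) (by rw [wd_length]; omega)]
          rw [hxg (n-1) (by omega), if_neg (by omega)]
        have e2 : ¬(w.length - 1 < k-1 ∨ w.length - 1 = n-2) := by
          intro hcase
          rw [h1, hxg (w.length-1) (by omega), if_pos hcase] at e1
          omega
        have hlk : k ≤ w.length ∧ w.length ≤ n-2 := by omega
        -- zeros transported
        have hzero : ∀ i, ∀ hik : i < k-1,
            ((wd n g)[(wd n g).length - w.length + i]'(by rw [wd_length]; omega)).val = 0 := by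
          intro i hik
          have h3 := hsuf.getElem (show i < w.length by omega)
          rw [← h3, hpre.getElem (show i < w.length by omega)]
          rw [hxg i (by omega), if_pos (by left; omega)]
        have hplen : (wd n g).length - w.length = n - w.length := by rw [wd_length]
        by_cases hpk : n - w.length ≤ k-1
        · have h5 := hzero (k-1-(n - w.length)) (by omega)
          rw [val_congr (wd n g) (show (wd n g).length - w.length + (k-1-(n - w.length)) = k-1 by
            rw [hplen]; omega) (by rw [wd_length]; omega)] at h5
          rw [hxg (k-1) (by omega), if_neg (by omega)] at h5
          exact Nat.one_ne_zero h5
        · -- p = k, n = 2k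
          have hpn : n - w.length = k ∧ n = 2*k := by omega
          have h5 := hzero (k-3) (by omega)
          rw [val_congr (wd n g) (show (wd n g).length - w.length + (k-3) = n-3 by
            rw [hplen]; omega) (by rw [wd_length]; omega)] at h5
          rw [hxg (n-3) (by omega), if_neg (by omega)] at h5
          exact Nat.one_ne_zero h5

theorem stmt6 (q n k : ℕ) (hn : 5 ≤ n) (hq : 1 < q) (hk1 : 1 ≤ k) (hk2 : k ≤ n - 1) :
    (IsCBF (SqCode q k n) ∧ ∀ x : List (Fin q), x.length = n → x ∉ SqCode q k n →
        ¬ IsCBF (SqCode q k n ∪ {x})) ↔ (k = n - 1 ∨ (1 ≤ k ∧ 2 * k < n)) := by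
  constructor
  · rintro ⟨hcbf, hne⟩
    by_contra hcon
    push_neg at hcon
    obtain ⟨h1, h2⟩ := hcon
    have h2k : n ≤ 2*k := h2 hk1
    have hk3 : 3 ≤ k := by omega
    have hkn2 : k ≤ n - 2 := by omega
    obtain ⟨x, hxl, hxn, hxc⟩ := expand_sq hn hq hk3 hkn2 h2k
    exact hne x hxl hxn hxc
  · intro hcond
    have hc' : k = n-1 ∨ 2*k < n := by
      rcases hcond with h | ⟨-, h⟩
      · exact Or.inl h
      · exact Or.inr h
    exact ⟨cbf_sq hn hk1 hk2,
      fun x hxl hxn => not_cbf_insert hn hq hk1 hk2 hc' x hxl hxn⟩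
end

section
/- Let q > 1 and let I, J be a bipartition of Z_q. The set S_{I,J}^{(3)}(5) ∪ (I^2 × J × I × J) is a non-expandable cross-bifix-free code in Z_q^5. -/
open List

lemma mem_S35 {q : ℕ} {I J : Set (Fin q)} {a b c d e : Fin q}
    (ha : a ∈ I) (hb : b ∈ I) (hc : c ∈ I) (hd : d ∈ J) (he : e ∈ J) :
    [a, b, c, d, e] ∈ Sijk I J 3 5 := by
  refine ⟨rfl, ?_, ⟨d, hd, rfl⟩, ⟨e, he, rfl⟩, ?_⟩
  · intro x hx
    simp only [List.take, List.mem_cons, List.not_mem_nil, or_false] at hx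
    rcases hx with rfl | rfl | rfl <;> assumption
  · rintro ⟨y, hy, hlen, -⟩
    simp only [show (5 : ℕ) - 3 - 2 = 0 from rfl, List.take_zero] at hy
    rw [List.infix_nil] at hy
    subst hy; simp at hlen

lemma S35_eq {q : ℕ} {I J : Set (Fin q)} {w : List (Fin q)} (hw : w ∈ Sijk I J 3 5) :
    ∃ a b c d e : Fin q, a ∈ I ∧ b ∈ I ∧ c ∈ I ∧ d ∈ J ∧ e ∈ J ∧ w = [a, b, c, d, e] := by
  obtain ⟨hlen, htake, ⟨d, hd, hd'⟩, ⟨e, he, he'⟩, -⟩ := hw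
  match w, hlen with
  | [a, b, c, x, y], _ =>
    simp only [List.getElem?_cons_succ, List.getElem?_cons_zero, Option.some.injEq] at hd' he'
    exact ⟨a, b, c, x, y, htake a (by simp), htake b (by simp), htake c (by simp),
      by rw [hd']; exact hd, by rw [he']; exact he, rfl⟩

theorem stmt8 (q : ℕ) (hq : 1 < q)
    (I J : Set (Fin q)) (hIJ : I ∪ J = Set.univ) (hd : I ∩ J = ∅)
    (hI : I.Nonempty) (hJ : J.Nonempty)
    (C : Set (List (Fin q)))
    (hC : C = Sijk I J 3 5 ∪
      {w | ∃ a b c d e : Fin q, a ∈ I ∧ b ∈ I ∧ c ∈ J ∧ d ∈ I ∧ e ∈ J ∧ w = [a, b, c, d, e]}) :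
    IsCBF C ∧ ∀ x : List (Fin q), x.length = 5 → x ∉ C → ¬ IsCBF (C ∪ {x}) := by
  have disj : ∀ x : Fin q, x ∈ I → x ∈ J → False := by
    intro x h1 h2
    have := Set.eq_empty_iff_forall_notMem.mp hd x
    exact this ⟨h1, h2⟩
  have total : ∀ x : Fin q, x ∈ I ∨ x ∈ J := by
    intro x
    have : x ∈ I ∪ J := by rw [hIJ]; trivial
    exact this
  -- characterization of membership in C
  have memC : ∀ w ∈ C, ∃ a b c d e : Fin q, w = [a, b, c, d, e] ∧
      ((a ∈ I ∧ b ∈ I ∧ c ∈ I ∧ d ∈ J ∧ e ∈ J) ∨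
       (a ∈ I ∧ b ∈ I ∧ c ∈ J ∧ d ∈ I ∧ e ∈ J)) := by
    intro w hw
    rw [hC] at hw
    rcases hw with hw | hw
    · obtain ⟨a, b, c, d, e, h1, h2, h3, h4, h5, hweq⟩ := S35_eq hw
      exact ⟨a, b, c, d, e, hweq, Or.inl ⟨h1, h2, h3, h4, h5⟩⟩
    · obtain ⟨a, b, c, d, e, h1, h2, h3, h4, h5, hweq⟩ := hw
      exact ⟨a, b, c, d, e, hweq, Or.inr ⟨h1, h2, h3, h4, h5⟩⟩
  have hcbf : IsCBF C := by
    intro u hu v hv w hw hwu hwv ⟨hpre, hsuf⟩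
    obtain ⟨a, b, c, d, e, rfl, hP⟩ := memC u hu
    obtain ⟨a', b', c', d', e', rfl, hQ⟩ := memC v hv
    rw [List.prefix_iff_eq_take] at hpre
    rw [List.suffix_iff_eq_drop] at hsuf
    have hlu : w.length < 5 := by simpa using hwu
    have hne : 1 ≤ w.length := by
      rcases Nat.eq_zero_or_pos w.length with h0 | h0
      · exact absurd (List.length_eq_zero_iff.mp h0) hw
      · exact h0
    interval_cases h : w.length <;>
      simp only [h, List.take, List.length_cons, List.length_nil] at hpre hsuf <;>
      rw [hpre] at hsuf <;>
      simp only [show (5:ℕ)-1 = 4 from rfl, show (5:ℕ)-2 = 3 from rfl,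
        show (5:ℕ)-3 = 2 from rfl, show (5:ℕ)-4 = 1 from rfl,
        List.drop, List.cons.injEq, and_true] at hsuf
    · -- length 1 : a = e'
      obtain rfl := hsuf
      rcases hP with ⟨h1,-⟩ | ⟨h1,-⟩ <;> rcases hQ with ⟨-,-,-,-,h5⟩ | ⟨-,-,-,-,h5⟩ <;>
        exact disj _ h1 h5
    · -- length 2 : a = d', b = e'
      obtain ⟨rfl, rfl⟩ := hsuf
      rcases hP with ⟨h1,h2,-⟩ | ⟨h1,h2,-⟩ <;> rcases hQ with ⟨-,-,-,h4,h5⟩ | ⟨-,-,-,h4,h5⟩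
      · exact disj _ h1 h4
      · exact disj _ h2 h5
      · exact disj _ h1 h4
      · exact disj _ h2 h5
    · -- length 3 : a = c', b = d', c = e'
      obtain ⟨rfl, rfl, rfl⟩ := hsuf
      rcases hP with ⟨h1,h2,-⟩ | ⟨h1,h2,-⟩ <;> rcases hQ with ⟨-,-,h3,h4,h5⟩ | ⟨-,-,h3,h4,h5⟩
      · exact disj _ h2 h4
      · exact disj _ h1 h3
      · exact disj _ h2 h4
      · exact disj _ h1 h3
    · -- length 4 : a = b', b = c', c = d', d = e'
      obtain ⟨rfl, rfl, rfl, rfl⟩ := hsuf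
      rcases hP with ⟨h1,h2,h3,h4,-⟩ | ⟨h1,h2,h3,h4,-⟩ <;>
        rcases hQ with ⟨-,h2',h3',h4',h5'⟩ | ⟨-,h2',h3',h4',h5'⟩
      · exact disj _ h3 h4'
      · exact disj _ h2 h3'
      · exact disj _ h4 h5'
      · exact disj _ h2 h3'
  refine ⟨hcbf, ?_⟩
  intro x hx5 hxC hbad
  obtain ⟨i, hi⟩ := hI
  obtain ⟨j, hj⟩ := hJ
  match x, hx5 with
  | [a, b, c, d, e], _ =>
    have hxmem : [a,b,c,d,e] ∈ C ∪ {[a,b,c,d,e]} := Or.inr rfl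
    have hS : ∀ {p r s t u' : Fin q}, p ∈ I → r ∈ I → s ∈ I → t ∈ J → u' ∈ J →
        [p,r,s,t,u'] ∈ C ∪ {[a,b,c,d,e]} := by
      intro p r s t u' h1 h2 h3 h4 h5
      exact Or.inl (hC ▸ Or.inl (mem_S35 h1 h2 h3 h4 h5))
    have hT : ∀ {p r s t u' : Fin q}, p ∈ I → r ∈ I → s ∈ J → t ∈ I → u' ∈ J →
        [p,r,s,t,u'] ∈ C ∪ {[a,b,c,d,e]} := by
      intro p r s t u' h1 h2 h3 h4 h5
      exact Or.inl (hC ▸ Or.inr ⟨p, r, s, t, u', h1, h2, h3, h4, h5, rfl⟩)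
    rcases total a with ha | ha
    · rcases total e with he | he
      · -- e ∈ I : w = [e], u = [e,i,i,j,j], v = x
        exact hbad _ (hS he hi hi hj hj) _ hxmem [e] (by simp) (by simp) (by simp)
          ⟨⟨[i,i,j,j], rfl⟩, ⟨[a,b,c,d], rfl⟩⟩
      · rcases total b with hb | hb
        · rcases total c with hcm | hcm
          · rcases total d with hdm | hdm
            · -- a,b,c,d ∈ I, e ∈ J : w = [c,d,e], u = [c,d,e,i,j], v = x
              exact hbad _ (hT hcm hdm he hi hj) _ hxmem [c,d,e] (by simp) (by simp) (by simp)
                ⟨⟨[i,j], rfl⟩, ⟨[a,b], rfl⟩⟩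
            · -- x ∈ S, contradiction
              exact hxC (hC ▸ Or.inl (mem_S35 ha hb hcm hdm he))
          · rcases total d with hdm | hdm
            · -- x ∈ I²JIJ, contradiction
              exact hxC (hC ▸ Or.inr ⟨a, b, c, d, e, ha, hb, hcm, hdm, he, rfl⟩)
            · -- a,b ∈ I, c,d,e ∈ J : w = [a,b,c,d], u = x, v = [i,a,b,c,d]
              exact hbad _ hxmem _ (hS hi ha hb hcm hdm) [a,b,c,d] (by simp) (by simp) (by simp)
                ⟨⟨[e], rfl⟩, ⟨[i], rfl⟩⟩
        · -- b ∈ J : w = [a,b], u = x, v = [i,i,j,a,b]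
          exact hbad _ hxmem _ (hT hi hi hj ha hb) [a,b] (by simp) (by simp) (by simp)
            ⟨⟨[c,d,e], rfl⟩, ⟨[i,i,j], rfl⟩⟩
    · -- a ∈ J : w = [a], u = x, v = [i,i,i,j,a]
      exact hbad _ hxmem _ (hS hi hi hi hj ha) [a] (by simp) (by simp) (by simp)
        ⟨⟨[b,c,d,e], rfl⟩, ⟨[i,i,i,j], rfl⟩⟩
end

section
/- Let q > 1 and let I, J be a bipartition of Z_q. The set S_{I,J}^{(4)}(6) ∪ (I × J × I × Z_q × J × J) is a non-expandable cross-bifix-free code in Z_q^6. -/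
open List

theorem sufGet {α : Type*} {w v : List α} (h : w <:+ v) (i : ℕ) (hi : i < w.length) :
    w[i] = v[v.length - w.length + i]'(by have := h.length_le; omega) := by
  obtain ⟨s, rfl⟩ := h
  have hs : (s ++ w).length - w.length = s.length := by simp
  simp only [hs]
  rw [List.getElem_append_right (by omega)]
  congr 1
  omega

theorem stmt9 (q : ℕ) (hq : 1 < q)
    (I J : Set (Fin q)) (hIJ : I ∪ J = Set.univ) (hd : I ∩ J = ∅)
    (hI : I.Nonempty) (hJ : J.Nonempty)
    (C : Set (List (Fin q)))
    (hC : C = Sijk I J 4 6 ∪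
      {w | ∃ a b c d e f : Fin q, a ∈ I ∧ b ∈ J ∧ c ∈ I ∧ e ∈ J ∧ f ∈ J ∧
        w = [a, b, c, d, e, f]}) :
    IsCBF C ∧ ∀ x : List (Fin q), x.length = 6 → x ∉ C → ¬ IsCBF (C ∪ {x}) := by
  have hdis : ∀ z : Fin q, z ∈ I → z ∈ J → False := by
    intro z h1 h2
    have : z ∈ I ∩ J := ⟨h1, h2⟩
    simp [hd] at this
  have hIJ' : ∀ z : Fin q, z ∈ I ∨ z ∈ J := by
    intro z
    have : z ∈ I ∪ J := hIJ ▸ Set.mem_univ z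
    exact this
  have hmem : ∀ u : List (Fin q), u ∈ C ↔ ∃ a b c d e f : Fin q,
      u = [a,b,c,d,e,f] ∧ a ∈ I ∧ e ∈ J ∧ f ∈ J ∧
      ((b ∈ I ∧ c ∈ I ∧ d ∈ I) ∨ (b ∈ J ∧ c ∈ I)) := by
    intro u
    subst hC
    constructor
    · rintro (hu | ⟨a,b,c,d,e,f,ha,hb,hc,he,hf,rfl⟩)
      · obtain ⟨hlen, htake, ⟨e, he, he'⟩, ⟨f, hf, hf'⟩, -⟩ := hu
        match u, hlen with
        | [a,b,c,d,e',f'], _ =>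
          simp only [List.getElem?_cons_succ, List.getElem?_cons_zero] at he' hf'
          refine ⟨a,b,c,d,e,f, ?_, ?_, he, hf, Or.inl ⟨?_, ?_, ?_⟩⟩ <;>
            simp_all [List.take]
      · exact ⟨a,b,c,d,e,f, rfl, ha, he, hf, Or.inr ⟨hb, hc⟩⟩
    · rintro ⟨a,b,c,d,e,f, rfl, ha, he, hf, (⟨hb,hc,hd'⟩ | ⟨hb,hc⟩)⟩
      · left
        refine ⟨rfl, ?_, ⟨e, he, rfl⟩, ⟨f, hf, rfl⟩, ?_⟩
        · intro x hx
          simp at hx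
          rcases hx with rfl|rfl|rfl|rfl <;> assumption
        · simp [IkFree]
      · exact Or.inr ⟨a,b,c,d,e,f,ha,hb,hc,he,hf,rfl⟩
  constructor
  · rintro u hu v hv w hne hwu hwv ⟨hp, hs⟩
    obtain ⟨a,b,c,d,e,f, rfl, ha, he, hf, hu2⟩ := (hmem u).mp hu
    obtain ⟨a',b',c',d',e',f', rfl, ha', he', hf', hv2⟩ := (hmem v).mp hv
    simp only [List.length_cons, List.length_nil] at hwu hwv
    have hpos : 0 < w.length := List.length_pos_iff.mpr hne
    have key : ∀ i (hi : i < w.length),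
        ([a,b,c,d,e,f] : List (Fin q))[i]'(by simp; omega) =
        ([a',b',c',d',e',f'] : List (Fin q))[6 - w.length + i]'(by simp; omega) := by
      intro i hi
      have h1 := hp.getElem hi
      have h2 := sufGet hs i hi
      rw [h1] at h2
      simpa using h2
    have hL : w.length = 1 ∨ w.length = 2 ∨ w.length = 3 ∨ w.length = 4 ∨ w.length = 5 := by
      omega
    rcases hL with h|h|h|h|h
    · have k0 := key 0 (by omega)
      simp [h] at k0
      exact hdis a ha (k0 ▸ hf')
    · have k0 := key 0 (by omega)
      simp [h] at k0
      exact hdis a ha (k0 ▸ he')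
    · have k0 := key 2 (by omega)
      simp [h] at k0
      have hcI : c ∈ I := by rcases hu2 with ⟨_,h,_⟩|⟨_,h⟩ <;> exact h
      exact hdis c hcI (k0 ▸ hf')
    · have k0 := key 2 (by omega)
      simp [h] at k0
      have hcI : c ∈ I := by rcases hu2 with ⟨_,h,_⟩|⟨_,h⟩ <;> exact h
      exact hdis c hcI (k0 ▸ he')
    · rcases hu2 with ⟨hbI,hcI,hdI⟩|⟨hbJ,hcI⟩ <;> rcases hv2 with ⟨hbI',hcI',hdI'⟩|⟨hbJ',hcI'⟩
      · have k0 := key 3 (by omega)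
        simp [h] at k0
        exact hdis d hdI (k0 ▸ he')
      · have k0 := key 0 (by omega)
        simp [h] at k0
        exact hdis a ha (k0 ▸ hbJ')
      · have k0 := key 1 (by omega)
        simp [h] at k0
        exact hdis c' (hcI') (k0 ▸ hbJ)
      · have k0 := key 0 (by omega)
        simp [h] at k0
        exact hdis a ha (k0 ▸ hbJ')
  · intro x hx6 hxC
    obtain ⟨x0,x1,x2,x3,x4,x5, rfl⟩ : ∃ a b c d e f, x = [a,b,c,d,e,f] := by
      match x, hx6 with
      | [a,b,c,d,e,f], _ => exact ⟨a,b,c,d,e,f, rfl⟩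
    obtain ⟨p, hp⟩ := hI
    obtain ⟨j, hj⟩ := hJ
    intro hcbf
    rcases hIJ' x0 with h0 | h0
    swap
    · -- x0 ∈ J : w = [x0], prefix of x, suffix of [p,j,p,p,j,x0] ∈ C
      exact hcbf _ (Or.inr rfl) [p,j,p,p,j,x0]
        (Or.inl ((hmem _).mpr ⟨p,j,p,p,j,x0, rfl, hp, hj, h0, Or.inr ⟨hj, hp⟩⟩))
        [x0] (by simp) (by simp) (by simp)
        ⟨⟨[x1,x2,x3,x4,x5], rfl⟩, ⟨[p,j,p,p,j], rfl⟩⟩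
    rcases hIJ' x5 with h5 | h5
    · -- x5 ∈ I : w = [x5], prefix of [x5,j,x5,x5,j,j], suffix of x
      exact hcbf [x5,j,x5,x5,j,j]
        (Or.inl ((hmem _).mpr ⟨x5,j,x5,x5,j,j, rfl, h5, hj, hj, Or.inr ⟨hj, h5⟩⟩))
        _ (Or.inr rfl)
        [x5] (by simp) (by simp) (by simp)
        ⟨⟨[j,x5,x5,j,j], rfl⟩, ⟨[x0,x1,x2,x3,x4], rfl⟩⟩
    rcases hIJ' x4 with h4 | h4
    · -- x4 ∈ I : w = [x4,x5], prefix of [x4,x5,p,p,j,j], suffix of x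
      exact hcbf [x4,x5,p,p,j,j]
        (Or.inl ((hmem _).mpr ⟨x4,x5,p,p,j,j, rfl, h4, hj, hj, Or.inr ⟨h5, hp⟩⟩))
        _ (Or.inr rfl)
        [x4,x5] (by simp) (by simp) (by simp)
        ⟨⟨[p,p,j,j], rfl⟩, ⟨[x0,x1,x2,x3], rfl⟩⟩
    rcases hIJ' x1 with h1 | h1
    swap
    · -- x1 ∈ J
      rcases hIJ' x2 with h2 | h2
      · -- x2 ∈ I : x ∈ C, contradiction
        exact hxC ((hmem _).mpr ⟨x0,x1,x2,x3,x4,x5, rfl, h0, h4, h5, Or.inr ⟨h1, h2⟩⟩)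
      · -- x2 ∈ J : w = [x0,x1,x2], prefix of x, suffix of [p,j,p,x0,x1,x2]
        exact hcbf _ (Or.inr rfl) [p,j,p,x0,x1,x2]
          (Or.inl ((hmem _).mpr ⟨p,j,p,x0,x1,x2, rfl, hp, h1, h2, Or.inr ⟨hj, hp⟩⟩))
          [x0,x1,x2] (by simp) (by simp) (by simp)
          ⟨⟨[x3,x4,x5], rfl⟩, ⟨[p,j,p], rfl⟩⟩
    -- x1 ∈ I
    rcases hIJ' x2 with h2 | h2
    · -- x2 ∈ I
      rcases hIJ' x3 with h3 | h3
      · -- x3 ∈ I : x ∈ C, contradiction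
        exact hxC ((hmem _).mpr ⟨x0,x1,x2,x3,x4,x5, rfl, h0, h4, h5, Or.inl ⟨h1, h2, h3⟩⟩)
      · -- x3 ∈ J : w = [x0,x1,x2,x3,x4], prefix of x, suffix of [p,x0,x1,x2,x3,x4]
        exact hcbf _ (Or.inr rfl) [p,x0,x1,x2,x3,x4]
          (Or.inl ((hmem _).mpr ⟨p,x0,x1,x2,x3,x4, rfl, hp, h3, h4, Or.inl ⟨h0, h1, h2⟩⟩))
          [x0,x1,x2,x3,x4] (by simp) (by simp) (by simp)
          ⟨⟨[x5], rfl⟩, ⟨[p], rfl⟩⟩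
    · -- x2 ∈ J
      rcases hIJ' x3 with h3 | h3
      · -- x3 ∈ I : w = [x1,x2,x3,x4,x5], prefix of [x1,x2,x3,x4,x5,j], suffix of x
        exact hcbf [x1,x2,x3,x4,x5,j]
          (Or.inl ((hmem _).mpr ⟨x1,x2,x3,x4,x5,j, rfl, h1, h5, hj, Or.inr ⟨h2, h3⟩⟩))
          _ (Or.inr rfl)
          [x1,x2,x3,x4,x5] (by simp) (by simp) (by simp)
          ⟨⟨[j], rfl⟩, ⟨[x0], rfl⟩⟩
      · -- x3 ∈ J : w = [x0,x1,x2,x3], prefix of x, suffix of [p,j,x0,x1,x2,x3]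
        exact hcbf _ (Or.inr rfl) [p,j,x0,x1,x2,x3]
          (Or.inl ((hmem _).mpr ⟨p,j,x0,x1,x2,x3, rfl, hp, h2, h3, Or.inr ⟨hj, h0⟩⟩))
          [x0,x1,x2,x3] (by simp) (by simp) (by simp)
          ⟨⟨[x4,x5], rfl⟩, ⟨[p,j], rfl⟩⟩
end

section
/- Let q > 1, n ≥ 5, n/2 ≤ k ≤ n-2, and let I, J be a bipartition of Z_q. If x ∈ Z_q^n has its first coordinate in J, or its last coordinate in I, then S_{I,J}^{(k)}(n) ∪ {x} is not a cross-bifix-free code. -/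
open List

lemma ikfree_short {α : Type*} (I : Set α) (k : ℕ) (w : List α) (h : w.length < k) :
    IkFree I k w := by
  rintro ⟨y, hy, hl, -⟩
  have := hy.length_le
  omega

lemma prefix_single_of_getElem? {α : Type*} (x : List α) (a : α) (h : x[0]? = some a) :
    [a] <+: x := by
  cases x with
  | nil => simp at h
  | cons b t =>
    simp at h
    exact ⟨t, by simp [h]⟩

lemma suffix_single_of_getElem? {α : Type*} (x : List α) (a : α) (h : x[x.length - 1]? = some a) :
    [a] <:+ x := by
  have hne : x ≠ [] := by rintro rfl; simp at h
  have := List.getLast?_eq_getElem? (l := x)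
  rw [this.symm] at h
  rw [List.getLast?_eq_some_iff] at h
  obtain ⟨l, rfl⟩ := h
  exact ⟨l, rfl⟩

theorem stmt10 (q n k : ℕ) (hn : 5 ≤ n) (hq : 1 < q) (hk1 : n ≤ 2 * k) (hk2 : k ≤ n - 2)
    (I J : Set (Fin q)) (hIJ : I ∪ J = Set.univ) (hd : I ∩ J = ∅)
    (hI : I.Nonempty) (hJ : J.Nonempty)
    (x : List (Fin q)) (hx : x.length = n)
    (hcond : (∃ a ∈ J, x[0]? = some a) ∨ (∃ a ∈ I, x[n-1]? = some a)) :
    ¬ IsCBF (Sijk I J k n ∪ {x}) := by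
  intro hC
  have hk3 : 3 ≤ k := by omega
  obtain ⟨i, hi⟩ := hI
  obtain ⟨j, hj⟩ := hJ
  have hxC : x ∈ Sijk I J k n ∪ {x} := Or.inr rfl
  rcases hcond with ⟨a, ha, hxa⟩ | ⟨a, ha, hxa⟩
  · -- x starts with a ∈ J; build u ending with a
    set u : List (Fin q) := List.replicate k i ++ (List.replicate (n-k-1) j ++ [a]) with hu_def
    have hulen : u.length = n := by simp [hu_def]; omega
    have hu : u ∈ Sijk I J k n := by
      refine ⟨hulen, ?_, ?_, ?_, ?_⟩
      · intro y hy
        rw [List.take_append_of_le_length (by simp)] at hy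
        simp at hy
        rw [hy.2]; exact hi
      · refine ⟨j, hj, ?_⟩
        rw [hu_def, List.getElem?_append_right (by simp)]
        simp only [List.length_replicate, Nat.sub_self]
        rw [List.getElem?_append_left (by simp; omega)]
        simp [List.getElem?_replicate]
        omega
      · refine ⟨a, ha, ?_⟩
        rw [show u = (List.replicate k i ++ List.replicate (n-k-1) j) ++ [a] from by
              simp [hu_def],
            show n-1 = (List.replicate k i ++ List.replicate (n-k-1) j).length from by
              simp; omega]
        exact List.getElem?_concat_length
      · apply ikfree_short
        have := List.length_take_le (n - k - 2) (u.drop (k+1))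
        omega
    exact hC x hxC u (Or.inl hu) [a] (by simp) (by simp [hx]; omega) (by simp [hulen]; omega)
      ⟨prefix_single_of_getElem? x a hxa,
       ⟨List.replicate k i ++ List.replicate (n-k-1) j, by simp [hu_def]⟩⟩
  · -- x ends with a ∈ I; build u starting with a
    set u : List (Fin q) := (a :: List.replicate (k-1) i) ++ List.replicate (n-k) j with hu_def
    have hulen : u.length = n := by simp [hu_def]; omega
    have hu : u ∈ Sijk I J k n := by
      refine ⟨hulen, ?_, ?_, ?_, ?_⟩
      · intro y hy
        rw [List.take_append_of_le_length (by simp; omega),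
            List.take_of_length_le (by simp; omega)] at hy
        rcases List.mem_cons.mp hy with rfl | h
        · exact ha
        · rw [List.eq_of_mem_replicate h]; exact hi
      · refine ⟨j, hj, ?_⟩
        rw [hu_def, List.getElem?_append_right (by simp; omega)]
        simp [List.getElem?_replicate]
        omega
      · refine ⟨j, hj, ?_⟩
        rw [hu_def, List.getElem?_append_right (by simp; omega)]
        simp [List.getElem?_replicate]
        omega
      · apply ikfree_short
        have := List.length_take_le (n - k - 2) (u.drop (k+1))
        omega
    have hsuf : [a] <:+ x := by
      apply suffix_single_of_getElem?
      rw [hx]; exact hxa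
    exact hC u (Or.inl hu) x hxC [a] (by simp) (by simp [hulen]; omega) (by simp [hx]; omega)
      ⟨⟨List.replicate (k-1) i ++ List.replicate (n-k) j, by simp [hu_def]⟩, hsuf⟩
end

section
/- Let n ≥ 6, q > 1, n/2 ≤ k < n-2, and let I, J be a bipartition of Z_q. For any integer ℓ with n-k-1 ≤ ℓ < k and any x ∈ I^ℓ × J^2 × Z_q^{n-k-3} × I × J^{k-ℓ}, the set S_{I,J}^{(k)}(n) ∪ {x} is a cross-bifix-free code. -/
open List

/-- Key clash lemma: if `w` is a prefix of `u` and a suffix of `v`, and at some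
aligned position `u` is forced into `I` while `v` is forced into `J`, we get a
contradiction since `I ∩ J = ∅`. -/
lemma cbf_clash {q : ℕ} {I J : Set (Fin q)} (hd : I ∩ J = ∅)
    {w u v : List (Fin q)} (hpre : w <+: u) (hsuf : w <:+ v)
    (j p : ℕ) (hj : j < w.length) (hp : v.length - w.length + j = p) {α β : Fin q}
    (hα : u[j]? = some α) (h1 : α ∈ I)
    (hβ : v[p]? = some β) (h2 : β ∈ J) : False := by
  obtain ⟨s, rfl⟩ := hpre
  obtain ⟨t, rfl⟩ := hsuf
  rw [List.getElem?_append_left hj] at hα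
  subst hp
  have hkey : (t ++ w)[(t ++ w).length - w.length + j]? = w[j]? := by
    rw [List.getElem?_append_right (by simp)]
    congr 1
    simp
  rw [hkey, hα] at hβ
  have hαβ : α = β := Option.some.inj hβ
  subst hαβ
  have : α ∈ I ∩ J := ⟨h1, h2⟩
  rw [hd] at this
  exact this

theorem stmt11 (q n k ℓ : ℕ) (hn : 6 ≤ n) (hq : 1 < q) (hk1 : n ≤ 2 * k) (hk2 : k < n - 2)
    (hl1 : n - k - 1 ≤ ℓ) (hl2 : ℓ < k)
    (I J : Set (Fin q)) (hIJ : I ∪ J = Set.univ) (hd : I ∩ J = ∅)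
    (hI : I.Nonempty) (hJ : J.Nonempty)
    (x : List (Fin q))
    (hx : ∃ (a : List (Fin q)) (b₁ b₂ : Fin q) (c : List (Fin q)) (d : Fin q)
        (e : List (Fin q)),
      x = a ++ [b₁, b₂] ++ c ++ [d] ++ e ∧
      a.length = ℓ ∧ (∀ y ∈ a, y ∈ I) ∧ b₁ ∈ J ∧ b₂ ∈ J ∧ c.length = n - k - 3 ∧
      d ∈ I ∧ e.length = k - ℓ ∧ (∀ y ∈ e, y ∈ J)) :
    IsCBF (Sijk I J k n ∪ {x}) := by
  obtain ⟨a, b₁, b₂, c, d, e, hxeq, hal, haI, hb1, hb2, hcl, hdI, hel, heJ⟩ := hx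
  have hd' : J ∩ I = ∅ := by rw [Set.inter_comm]; exact hd
  have hkn : k + 3 ≤ n := by omega
  have hxlen : x.length = n := by
    subst hxeq; simp [hal, hcl, hel]; omega
  -- facts about x
  have hxI : ∀ j, j < ℓ → ∃ α ∈ I, x[j]? = some α := by
    intro j hj
    subst hxeq
    have hj' : j < a.length := by omega
    refine ⟨a[j], haI _ (List.getElem_mem hj'), ?_⟩
    rw [List.getElem?_append_left (by simp; omega),
      List.getElem?_append_left (by simp; omega),
      List.getElem?_append_left (by simp; omega),
      List.getElem?_append_left hj',
      List.getElem?_eq_getElem hj']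
  have hxb1 : x[ℓ]? = some b₁ := by
    subst hxeq
    rw [List.getElem?_append_left (by simp; omega),
      List.getElem?_append_left (by simp; omega),
      List.getElem?_append_left (by simp; omega),
      List.getElem?_append_right (by omega)]
    have h0 : ℓ - a.length = 0 := by omega
    rw [h0]
    simp
  have hxb2 : x[ℓ + 1]? = some b₂ := by
    subst hxeq
    rw [List.getElem?_append_left (by simp; omega),
      List.getElem?_append_left (by simp; omega),
      List.getElem?_append_left (by simp; omega),
      List.getElem?_append_right (by omega)]
    have h0 : ℓ + 1 - a.length = 1 := by omega
    rw [h0]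
    simp
  have hxd : x[ℓ + n - k - 1]? = some d := by
    subst hxeq
    rw [List.getElem?_append_left (by simp; omega),
      List.getElem?_append_right (by simp; omega)]
    have h0 : ℓ + n - k - 1 - (a ++ [b₁, b₂] ++ c).length = 0 := by simp; omega
    rw [h0]
    simp
  have hxe : ∀ p, ℓ + (n - k) ≤ p → p < n → ∃ α ∈ J, x[p]? = some α := by
    intro p h1 h2
    subst hxeq
    have hP : (a ++ [b₁, b₂] ++ c ++ [d]).length = ℓ + (n - k) := by simp; omega
    rw [List.getElem?_append_right (by omega), hP]
    have hi : p - (ℓ + (n - k)) < e.length := by omega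
    exact ⟨e[p - (ℓ + (n - k))], heJ _ (List.getElem_mem hi),
      List.getElem?_eq_getElem hi⟩
  -- facts about members of S
  have hS : ∀ z ∈ Sijk I J k n, z.length = n ∧
      (∀ j, j < k → ∃ α ∈ I, z[j]? = some α) ∧
      (∃ α ∈ J, z[k]? = some α) ∧ (∃ α ∈ J, z[n - 1]? = some α) := by
    intro z hz
    obtain ⟨hzl, hzI, hzk, hzn, -⟩ := hz
    refine ⟨hzl, ?_, hzk, hzn⟩
    intro j hj
    have hj' : j < z.length := by omega
    have hjt : j < (z.take k).length := by simp [hzl]; omega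
    refine ⟨z[j], ?_, List.getElem?_eq_getElem hj'⟩
    have hmem := List.getElem_mem hjt
    rw [List.getElem_take] at hmem
    exact hzI _ hmem
  intro u hu v hv w hw hwu hwv hcon
  obtain ⟨hpre, hsuf⟩ := hcon
  set m := w.length with hm
  have hm1 : 1 ≤ m := List.length_pos_iff.mpr hw
  rcases hu with hu | hu <;> rcases hv with hv | hv
  · -- u ∈ S, v ∈ S
    obtain ⟨hulen, huI, huk, hun⟩ := hS u hu
    obtain ⟨hvlen, hvI, hvk, hvn⟩ := hS v hv
    rcases le_or_gt m k with hmk | hmk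
    · obtain ⟨α, hα1, hα2⟩ := huI (m - 1) (by omega)
      obtain ⟨β, hβ1, hβ2⟩ := hvn
      exact cbf_clash hd hpre hsuf (m - 1) (n - 1) (by omega) (by omega) hα2 hα1 hβ2 hβ1
    · obtain ⟨α, hα1, hα2⟩ := huI (m + k - n) (by omega)
      obtain ⟨β, hβ1, hβ2⟩ := hvk
      exact cbf_clash hd hpre hsuf (m + k - n) k (by omega) (by omega) hα2 hα1 hβ2 hβ1
  · -- u ∈ S, v = x
    rw [Set.mem_singleton_iff] at hv; subst hv
    obtain ⟨hulen, huI, huk, hun⟩ := hS u hu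
    rcases le_or_gt m k with hmk | hmk
    · obtain ⟨α, hα1, hα2⟩ := huI (m - 1) (by omega)
      obtain ⟨β, hβ1, hβ2⟩ := hxe (n - 1) (by omega) (by omega)
      exact cbf_clash hd hpre hsuf (m - 1) (n - 1) (by omega) (by omega) hα2 hα1 hβ2 hβ1
    · obtain ⟨α, hα1, hα2⟩ := huI (m + ℓ + 1 - n) (by omega)
      exact cbf_clash hd hpre hsuf (m + ℓ + 1 - n) (ℓ + 1) (by omega) (by omega)
        hα2 hα1 hxb2 hb2
  · -- u = x, v ∈ S
    rw [Set.mem_singleton_iff] at hu; subst hu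
    obtain ⟨hvlen, hvI, hvk, hvn⟩ := hS v hv
    by_cases h1 : m ≤ ℓ
    · obtain ⟨α, hα1, hα2⟩ := hxI (m - 1) (by omega)
      obtain ⟨β, hβ1, hβ2⟩ := hvn
      exact cbf_clash hd hpre hsuf (m - 1) (n - 1) (by omega) (by omega) hα2 hα1 hβ2 hβ1
    · by_cases h2 : m + k + 1 ≤ n + ℓ
      · obtain ⟨α, hα1, hα2⟩ := hxI (m + k - n) (by omega)
        obtain ⟨β, hβ1, hβ2⟩ := hvk
        exact cbf_clash hd hpre hsuf (m + k - n) k (by omega) (by omega) hα2 hα1 hβ2 hβ1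
      · by_cases h3 : m + k = n + ℓ
        · obtain ⟨β, hβ1, hβ2⟩ := hvn
          exact cbf_clash hd hpre hsuf (ℓ + n - k - 1) (n - 1) (by omega) (by omega)
            hxd hdI hβ2 hβ1
        · -- m ≥ n + ℓ - k + 1 : x[ℓ] ∈ J meets v[n-m+ℓ] ∈ I
          obtain ⟨β, hβ1, hβ2⟩ := hvI (n - m + ℓ) (by omega)
          exact cbf_clash hd' hpre hsuf ℓ (n - m + ℓ) (by omega) (by omega)
            hxb1 hb1 hβ2 hβ1
  · -- u = x, v = x
    rw [Set.mem_singleton_iff] at hu; subst hu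
    rw [Set.mem_singleton_iff] at hv; subst hv
    by_cases h1 : n ≤ m + ℓ
    · obtain ⟨α, hα1, hα2⟩ := hxI (m + ℓ - n) (by omega)
      exact cbf_clash hd hpre hsuf (m + ℓ - n) ℓ (by omega) (by omega) hα2 hα1 hxb1 hb1
    · by_cases h2 : n + ℓ ≤ m + k
      · obtain ⟨β, hβ1, hβ2⟩ := hxe (n - m + (ℓ + n - k - 1)) (by omega) (by omega)
        exact cbf_clash hd hpre hsuf (ℓ + n - k - 1) (n - m + (ℓ + n - k - 1))
          (by omega) (by omega) hxd hdI hβ2 hβ1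
      · by_cases h3 : m + ℓ + 1 = n
        · obtain ⟨α, hα1, hα2⟩ := hxI 0 (by omega)
          exact cbf_clash hd hpre hsuf 0 (ℓ + 1) (by omega) (by omega) hα2 hα1 hxb2 hb2
        · by_cases h4 : k ≤ m + ℓ
          · obtain ⟨α, hα1, hα2⟩ := hxI (m + ℓ - k) (by omega)
            obtain ⟨β, hβ1, hβ2⟩ := hxe (ℓ + (n - k)) (by omega) (by omega)
            exact cbf_clash hd hpre hsuf (m + ℓ - k) (ℓ + (n - k)) (by omega) (by omega)
              hα2 hα1 hβ2 hβ1
          · obtain ⟨α, hα1, hα2⟩ := hxI 0 (by omega)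
            obtain ⟨β, hβ1, hβ2⟩ := hxe (n - m) (by omega) (by omega)
            exact cbf_clash hd hpre hsuf 0 (n - m) (by omega) (by omega) hα2 hα1 hβ2 hβ1
end

section
/- Let n ≥ 5, q > 1, and let I, J be a bipartition of Z_q. For any x ∈ I^2 × J × I × J^{n-4}, the set (I^{n-2} × J^2) ∪ {x} is a cross-bifix-free code in Z_q^n. -/
open List

theorem stmt12 (q n : ℕ) (hn : 5 ≤ n) (hq : 1 < q)
    (I J : Set (Fin q)) (hIJ : I ∪ J = Set.univ) (hd : I ∩ J = ∅)
    (hI : I.Nonempty) (hJ : J.Nonempty)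
    (x : List (Fin q))
    (hx : ∃ (a₁ a₂ b c : Fin q) (e : List (Fin q)),
      x = a₁ :: a₂ :: b :: c :: e ∧ a₁ ∈ I ∧ a₂ ∈ I ∧ b ∈ J ∧ c ∈ I ∧
      e.length = n - 4 ∧ (∀ y ∈ e, y ∈ J)) :
    IsCBF ({w | ∃ a b : List (Fin q), w = a ++ b ∧ a.length = n - 2 ∧ (∀ y ∈ a, y ∈ I) ∧
        b.length = 2 ∧ (∀ y ∈ b, y ∈ J)} ∪ {x}) := by
  obtain ⟨a₁, a₂, b, c, e, hxe, ha1, ha2, hb, hc, hel, heJ⟩ := hx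
  subst hxe
  have disj : ∀ a : Fin q, a ∈ I → a ∈ J → False := fun a h1 h2 =>
    Set.eq_empty_iff_forall_notMem.mp hd a ⟨h1, h2⟩
  have pre : ∀ {w u : List (Fin q)}, w <+: u → ∀ i (hi : i < w.length) (hi' : i < u.length),
      w[i] = u[i] := by
    rintro w u ⟨t, rfl⟩ i hi hi'
    exact (List.getElem_append_left hi).symm
  have suf : ∀ {w v : List (Fin q)}, w <:+ v → ∀ i j (hi : i < w.length) (hj : j < v.length),
      j + w.length = v.length + i → w[i] = v[j] := by
    rintro w v ⟨s, rfl⟩ i j hi hj hij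
    have hj' : j = s.length + i := by simp at hij; omega
    subst hj'
    rw [List.getElem_append_right (by omega)]
    simp
  have c1I : ∀ (a b' : List (Fin q)), a.length = n - 2 → (∀ y ∈ a, y ∈ I) →
      ∀ i, i < n - 2 → ∀ (hi' : i < (a ++ b').length), (a ++ b')[i] ∈ I := by
    intro a b' hal haI i hi hi'
    rw [List.getElem_append_left (by omega)]
    exact haI _ (List.getElem_mem _)
  have c1J : ∀ (a b' : List (Fin q)), a.length = n - 2 → (∀ y ∈ b', y ∈ J) →
      ∀ i, n - 2 ≤ i → ∀ (hi' : i < (a ++ b').length), (a ++ b')[i] ∈ J := by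
    intro a b' hal hbJ i hi hi'
    rw [List.getElem_append_right (by omega)]
    exact hbJ _ (List.getElem_mem _)
  have xlen : (a₁ :: a₂ :: b :: c :: e).length = n := by simp; omega
  have xI : ∀ i, (i = 0 ∨ i = 1 ∨ i = 3) → ∀ (hi : i < (a₁ :: a₂ :: b :: c :: e).length),
      (a₁ :: a₂ :: b :: c :: e)[i] ∈ I := by
    rintro i (rfl | rfl | rfl) hi <;> simpa
  have xJ : ∀ i, (i = 2 ∨ 4 ≤ i) → ∀ (hi : i < (a₁ :: a₂ :: b :: c :: e).length),
      (a₁ :: a₂ :: b :: c :: e)[i] ∈ J := by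
    rintro i (rfl | h4) hi
    · simpa
    · obtain ⟨i, rfl⟩ : ∃ j, i = j + 4 := ⟨i - 4, by omega⟩
      have : (a₁ :: a₂ :: b :: c :: e)[i + 4] = e[i]'(by simp at hi; omega) := by
        simp [List.getElem_cons_succ]
      rw [this]
      exact heJ _ (List.getElem_mem _)
  rintro u hu v hv w hw hwu hwv ⟨hpre, hsuf⟩
  have hL1 : 1 ≤ w.length := List.length_pos_iff.mpr hw
  have key : ∀ i (hi : i < w.length), w[i] ∈ I → w[i] ∈ J → False :=
    fun i hi h1 h2 => disj _ h1 h2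
  rcases hu with ⟨a, b', rfl, haL, haI, hbL, hbJ⟩ | rfl <;>
    rcases hv with ⟨a2, b2, rfl, ha2L, ha2I, hb2L, hb2J⟩ | rfl
  · -- u ∈ C1, v ∈ C1
    have hul : (a ++ b').length = n := by simp; omega
    have hvl : (a2 ++ b2).length = n := by simp; omega
    rw [hul] at hwu
    by_cases hcase : w.length ≤ n - 2
    · refine key (w.length - 1) (by omega) ?_ ?_
      · rw [pre hpre (w.length - 1) (by omega) (by omega)]
        exact c1I a b' haL haI _ (by omega) _
      · rw [suf hsuf (w.length - 1) (n - 1) (by omega) (by omega) (by omega)]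
        exact c1J a2 b2 ha2L hb2J _ (by omega) _
    · refine key (n - 3) (by omega) ?_ ?_
      · rw [pre hpre (n - 3) (by omega) (by omega)]
        exact c1I a b' haL haI _ (by omega) _
      · rw [suf hsuf (n - 3) (n - 2) (by omega) (by omega) (by omega)]
        exact c1J a2 b2 ha2L hb2J _ (by omega) _
  · -- u ∈ C1, v = x
    have hul : (a ++ b').length = n := by simp; omega
    rw [hul] at hwu
    rw [xlen] at hwv
    by_cases hcase : w.length ≤ n - 2
    · refine key (w.length - 1) (by omega) ?_ ?_
      · rw [pre hpre (w.length - 1) (by omega) (by omega)]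
        exact c1I a b' haL haI _ (by omega) _
      · rw [suf hsuf (w.length - 1) (n - 1) (by omega) (by omega) (by omega)]
        exact xJ _ (Or.inr (by omega)) _
    · refine key 1 (by omega) ?_ ?_
      · rw [pre hpre 1 (by omega) (by omega)]
        exact c1I a b' haL haI _ (by omega) _
      · rw [suf hsuf 1 2 (by omega) (by omega) (by omega)]
        exact xJ _ (Or.inl rfl) _
  · -- u = x, v ∈ C1
    have hvl : (a2 ++ b2).length = n := by simp; omega
    rw [hvl] at hwv
    rw [xlen] at hwu
    by_cases h3 : w.length = 3
    · refine key 1 (by omega) ?_ ?_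
      · rw [pre hpre 1 (by omega) (by omega)]
        exact xI _ (by omega) _
      · rw [suf hsuf 1 (n - 2) (by omega) (by omega) (by omega)]
        exact c1J a2 b2 ha2L hb2J _ (by omega) _
    · by_cases h5 : 5 ≤ w.length
      · refine key 2 (by omega) ?_ ?_
        · rw [suf hsuf 2 (n - w.length + 2) (by omega) (by omega) (by omega)]
          exact c1I a2 b2 ha2L ha2I _ (by omega) _
        · rw [pre hpre 2 (by omega) (by omega)]
          exact xJ _ (Or.inl rfl) _
      · -- w.length ∈ {1, 2, 4}
        refine key (w.length - 1) (by omega) ?_ ?_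
        · rw [pre hpre (w.length - 1) (by omega) (by omega)]
          exact xI _ (by omega) _
        · rw [suf hsuf (w.length - 1) (n - 1) (by omega) (by omega) (by omega)]
          exact c1J a2 b2 ha2L hb2J _ (by omega) _
  · -- u = x, v = x
    rw [xlen] at hwu hwv
    by_cases hs1 : w.length = n - 1
    · refine key 1 (by omega) ?_ ?_
      · rw [pre hpre 1 (by omega) (by omega)]
        exact xI _ (by omega) _
      · rw [suf hsuf 1 2 (by omega) (by omega) (by omega)]
        exact xJ _ (Or.inl rfl) _
    · by_cases hs3 : w.length = n - 3
      · refine key 1 (by omega) ?_ ?_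
        · rw [pre hpre 1 (by omega) (by omega)]
          exact xI _ (by omega) _
        · rw [suf hsuf 1 4 (by omega) (by omega) (by omega)]
          exact xJ _ (Or.inr (by omega)) _
      · refine key 0 (by omega) ?_ ?_
        · rw [pre hpre 0 (by omega) (by omega)]
          exact xI _ (by omega) _
        · rw [suf hsuf 0 (n - w.length) (by omega) (by omega) (by omega)]
          exact xJ _ (by omega) _
end

section
/- Let n ≥ 7, q > 1, n/2 ≤ k ≤ n-2, t = max{2, n-k-1}, and let I, J be a bipartition of Z_q. Then the code U_{I,J}^{(t)}(n) is a cross-bifix-free code. -/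
open List

/-- The set `V_{I,J}^{(t)}(m)` (with ambient parameters `n, k`): words of length `m`
whose first `t` coordinates lie in `I`, whose `(t+1)`-th coordinate lies in `J`,
whose `(n-k+t)`-th coordinate lies in `I` when `m > n-k+t`, and whose last
coordinate lies in `J`. -/
def Vset {q : ℕ} (I J : Set (Fin q)) (n k t m : ℕ) : Set (List (Fin q)) :=
  {w | w.length = m ∧ (∀ x ∈ w.take t, x ∈ I) ∧ (∃ a ∈ J, w[t]? = some a) ∧
       (n - k + t < m → ∃ a ∈ I, w[n - k + t - 1]? = some a) ∧
       (∃ a ∈ J, w[m - 1]? = some a)}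

/-- The set `U_{I,J}^{(t)}(m)`: words of `V_{I,J}^{(t)}(m)` whose suffix of length `ℓ`
does not belong to `V_{I,J}^{(t)}(ℓ)` for all `t+1 ≤ ℓ ≤ m-(t+1)` with `ℓ ≠ n-k+t`. -/
def Uset {q : ℕ} (I J : Set (Fin q)) (n k t m : ℕ) : Set (List (Fin q)) :=
  {w | w ∈ Vset I J n k t m ∧ ∀ ℓ : ℕ, t + 1 ≤ ℓ → ℓ + (t + 1) ≤ m → ℓ ≠ n - k + t →
       w.drop (m - ℓ) ∉ Vset I J n k t ℓ}

lemma disj_aux {q : ℕ} {I J : Set (Fin q)} (hd : I ∩ J = ∅) {a b : Fin q}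
    (ha : a ∈ I) (hb : b ∈ J) (hab : a = b) : False := by
  subst hab
  have : a ∈ I ∩ J := ⟨ha, hb⟩
  simp [hd] at this

lemma take_mem_aux {q : ℕ} {I : Set (Fin q)} {w : List (Fin q)} {t i : ℕ}
    (h : ∀ x ∈ w.take t, x ∈ I) (hit : i < t) (hiw : i < w.length) :
    ∃ a ∈ I, w[i]? = some a := by
  refine ⟨w[i], ?_, (List.getElem?_eq_getElem hiw)⟩
  have hi' : i < (w.take t).length := by simp; omega
  have := h (w.take t)[i] (List.getElem_mem hi')
  rwa [List.getElem_take] at this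

theorem stmt13 (q n k t : ℕ) (hn : 7 ≤ n) (hq : 1 < q) (hk1 : n ≤ 2 * k) (hk2 : k ≤ n - 2)
    (ht : t = max 2 (n - k - 1))
    (I J : Set (Fin q)) (hIJ : I ∪ J = Set.univ) (hd : I ∩ J = ∅)
    (hI : I.Nonempty) (hJ : J.Nonempty) :
    IsCBF (Uset I J n k t n) := by
  intro u hu v hv w hw hwu hwv ⟨hpre, hsuf⟩
  obtain ⟨⟨hulen, hutake, huJ, huI, hulast⟩, huU⟩ := hu
  obtain ⟨⟨hvlen, hvtake, hvJ, hvI, hvlast⟩, hvU⟩ := hv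
  set ℓ := w.length with hℓ
  have hℓ1 : 1 ≤ ℓ := List.length_pos_iff.mpr hw
  have hℓn : ℓ < n := by omega
  -- arithmetic facts
  have harith : 2 ≤ t ∧ t < k ∧ t + 1 ≤ n - k + t ∧ n - k + t < n ∧ 2 * t + 1 ≤ n := by
    omega
  obtain ⟨ht2, htk, hnk1, hnk2, h2t⟩ := harith
  -- prefix / suffix decompositions
  obtain ⟨su, hsu⟩ := hpre
  obtain ⟨pv, hpv⟩ := hsuf
  have hpvlen : pv.length = n - ℓ := by
    have := congrArg List.length hpv
    simp at this; omega
  -- getElem? transfer along the prefix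
  have hgu : ∀ i, i < ℓ → w[i]? = u[i]? := by
    intro i hi
    rw [← hsu, List.getElem?_append_left (by omega)]
  -- getElem? transfer along the suffix
  have hgv : ∀ i, n - ℓ ≤ i → i < n → v[i]? = w[i - (n - ℓ)]? := by
    intro i hi1 hi2
    rw [← hpv, List.getElem?_append_right (by omega), hpvlen]
  -- w's last coordinate is v's last coordinate, hence in J
  have hwlast : ∃ a ∈ J, w[ℓ - 1]? = some a := by
    obtain ⟨a, haJ, hav⟩ := hvlast
    exact ⟨a, haJ, by rw [← hav, hgv (n - 1) (by omega) (by omega)]; congr 1; omega⟩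
  rcases le_or_gt ℓ t with hcase | hcase
  · -- Case A : ℓ ≤ t, last coordinate of w is in I (from u) and in J (from v)
    obtain ⟨a, haI, hau⟩ := take_mem_aux hutake (show ℓ - 1 < t by omega)
      (show ℓ - 1 < u.length by omega)
    obtain ⟨b, hbJ, hbw⟩ := hwlast
    rw [hgu (ℓ - 1) (by omega)] at hbw
    exact disj_aux hd haI hbJ (by rw [hau] at hbw; exact (Option.some_injective _ hbw))
  rcases le_or_gt (ℓ + (t + 1)) n with hcase2 | hcase2
  · rcases eq_or_ne ℓ (n - k + t) with hcase3 | hcase3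
    · -- Case B2 : ℓ = n - k + t
      obtain ⟨a, haI, hau⟩ := huI (by omega)
      obtain ⟨b, hbJ, hbw⟩ := hwlast
      rw [hgu (ℓ - 1) (by omega)] at hbw
      have : u[ℓ - 1]? = some a := by rw [hcase3]; exact hau
      exact disj_aux hd haI hbJ (by rw [this] at hbw; exact (Option.some_injective _ hbw))
    · -- Case B1 : middle range, w ∈ Vset, contradiction with v ∈ Uset
      refine hvU ℓ (by omega) hcase2 hcase3 ?_
      have hdrop : v.drop (n - ℓ) = w := by
        rw [← hpv, ← hpvlen, List.drop_left]
      rw [hdrop]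
      refine ⟨rfl, ?_, ?_, ?_, hwlast⟩
      · intro x hx
        apply hutake
        rw [← hsu, List.take_append_of_le_length (by omega)] at *
        exact hx
      · obtain ⟨a, haJ, hau⟩ := huJ
        exact ⟨a, haJ, by rw [hgu t (by omega)]; exact hau⟩
      · intro hlt
        obtain ⟨a, haI, hau⟩ := huI (by omega)
        exact ⟨a, haI, by rw [hgu (n - k + t - 1) (by omega)]; exact hau⟩
  · -- Case B3 : ℓ large, v's (t+1)-th coordinate in J but also in I via w and u
    obtain ⟨b, hbJ, hbv⟩ := hvJ
    have hd1 : 1 ≤ n - ℓ := by omega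
    have hdt : n - ℓ ≤ t := by omega
    rw [hgv t (by omega) (by omega), hgu (t - (n - ℓ)) (by omega)] at hbv
    obtain ⟨a, haI, hau⟩ := take_mem_aux hutake (show t - (n - ℓ) < t by omega)
      (show t - (n - ℓ) < u.length by omega)
    exact disj_aux hd haI hbJ (by rw [hau] at hbv; exact (Option.some_injective _ hbv))
end

section
/- Let n ≥ 7, q > 1, n/2 ≤ k ≤ n-2, t = max{2, n-k-1}, and let I, J be a bipartition of Z_q. Then S_{I,J}^{(k)}(n) ∪ U_{I,J}^{(t)}(n) is a cross-bifix-free code; moreover, no proper nonempty prefix of an element of U_{I,J}^{(t)}(n) is a proper nonempty suffix of an element of S_{I,J}^{(k)}(n), and vice versa. -/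
open List

/-!
Every codeword of `S` starts with a run of `k` letters from `I` followed by a letter from `J`,
every codeword of `U` starts with a run of `t` such letters followed by a letter from `J`, and
all codewords end in `J`. An overlap `w` that is a prefix of `u` and a suffix of `v` therefore
reads each of its positions both in `u` and in `v`; for almost every length of `w` some position
is forced into `I` by one word and into `J` by the other. The remaining lengths are exactly those
for which a suffix of `v ∈ U` would be a word of `V^{(t)}(ℓ)`, which `U` excludes.
-/

section Letters

variable {α : Type*} {I J : Set α} {l u v w : List α} {i j : ℕ}

/-- Stated with `l[i]?` so that it matches, by definition, the single-coordinate conditions of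
`Sijk` and `Vset`. -/
def LetterIn (I : Set α) (l : List α) (i : ℕ) : Prop :=
  ∃ a ∈ I, l[i]? = some a

theorem letterIn_iff : LetterIn I l i ↔ ∃ h : i < l.length, l[i] ∈ I := by
  simp only [LetterIn, List.getElem?_eq_some_iff]
  constructor
  · rintro ⟨a, ha, hi, rfl⟩
    exact ⟨hi, ha⟩
  · rintro ⟨hi, h⟩
    exact ⟨_, h, hi, rfl⟩

theorem LetterIn.lt_length (h : LetterIn I l i) : i < l.length :=
  (letterIn_iff.1 h).1

theorem forall_mem_take_iff_letterIn {p : ℕ} :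
    (∀ x ∈ l.take p, x ∈ I) ↔ ∀ i < p, i < l.length → LetterIn I l i := by
  simp only [List.mem_take_iff_getElem, letterIn_iff, lt_min_iff]
  constructor
  · rintro h i hip hil
    exact ⟨hil, h _ ⟨i, ⟨hip, hil⟩, rfl⟩⟩
  · rintro h _ ⟨i, ⟨hip, hil⟩, rfl⟩
    exact (h i hip hil).2

theorem letterIn_drop {d : ℕ} : LetterIn I (l.drop d) i ↔ LetterIn I l (d + i) := by
  simp only [LetterIn, List.getElem?_drop]

theorem LetterIn.not_letterIn (hIJ : Disjoint I J) (hI : LetterIn I l i) :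
    ¬ LetterIn J l i := by
  rw [letterIn_iff] at hI ⊢
  obtain ⟨hi, hI⟩ := hI
  exact fun ⟨_, hJ⟩ => hIJ.notMem_of_mem_left hI hJ

theorem List.IsPrefix.letterIn_iff (h : w <+: u) (hi : i < w.length) :
    LetterIn I w i ↔ LetterIn I u i := by
  obtain ⟨s, rfl⟩ := h
  rw [LetterIn, LetterIn, List.getElem?_append_left hi]

theorem List.IsSuffix.letterIn_iff (h : w <:+ v) (hj : v.length - w.length + i = j) :
    LetterIn I w i ↔ LetterIn I v j := by
  obtain ⟨p, rfl⟩ := h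
  rw [LetterIn, LetterIn, ← hj, List.length_append, Nat.add_sub_cancel,
    List.getElem?_append_right (by omega), Nat.add_sub_cancel_left]

theorem letterIn_of_overlap (hpre : w <+: u) (hsuf : w <:+ v) (hi : i < w.length)
    (hj : v.length - w.length + i = j) (hu : LetterIn I u i) : LetterIn I v j :=
  (hsuf.letterIn_iff hj).1 ((hpre.letterIn_iff hi).2 hu)

theorem false_of_overlap (hIJ : Disjoint I J) (hpre : w <+: u) (hsuf : w <:+ v)
    (hi : i < w.length) (hj : v.length - w.length + i = j)
    (hu : LetterIn I u i) (hv : LetterIn J v j) : False :=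
  (letterIn_of_overlap hpre hsuf hi hj hu).not_letterIn hIJ hv

end Letters

section Overlap

variable {α : Type*} {I J : Set α} {u v w : List α}

def NoCrossOverlap (n : ℕ) (C D : Set (List α)) : Prop :=
  ∀ u ∈ C, ∀ v ∈ D, ∀ w : List α, w ≠ [] → w.length < n → ¬ (w <+: u ∧ w <:+ v)

theorem isCBF_union_of_noCrossOverlap {n : ℕ} {C D : Set (List α)}
    (hC : ∀ u ∈ C, u.length = n) (hD : ∀ u ∈ D, u.length = n)
    (hCC : NoCrossOverlap n C C) (hCD : NoCrossOverlap n C D)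
    (hDC : NoCrossOverlap n D C) (hDD : NoCrossOverlap n D D) : IsCBF (C ∪ D) := by
  rintro u hu v hv w hw hwu - hwv
  rcases hu with hu | hu <;> rcases hv with hv | hv
  · exact hCC u hu v hv w hw (hC u hu ▸ hwu) hwv
  · exact hCD u hu v hv w hw (hC u hu ▸ hwu) hwv
  · exact hDC u hu v hv w hw (hD u hu ▸ hwu) hwv
  · exact hDD u hu v hv w hw (hD u hu ▸ hwu) hwv

theorem run_lt_length_of_overlap (hIJ : Disjoint I J) (hpre : w <+: u) (hsuf : w <:+ v)
    (hw : w ≠ []) {p : ℕ} (hu : ∀ x ∈ u.take p, x ∈ I) (hv : LetterIn J v (v.length - 1)) :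
    p < w.length := by
  have hw0 := List.length_pos_iff.2 hw
  have := hpre.length_le
  have := hsuf.length_le
  by_contra! hwp
  exact false_of_overlap hIJ hpre hsuf (i := w.length - 1) (by omega) (by omega)
    (forall_mem_take_iff_letterIn.1 hu _ (by omega) (by omega)) hv

end Overlap

section Codes

variable {q n k t : ℕ} {I J : Set (Fin q)} {u v w : List (Fin q)}

theorem mem_Vset_of_prefix {m : ℕ} (hu : u ∈ Vset I J n k t m) (hpre : w <+: u)
    (ht : t < w.length) (hlast : LetterIn J w (w.length - 1)) :
    w ∈ Vset I J n k t w.length := by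
  obtain ⟨hul, huI, hut, humid, -⟩ := hu
  have := hpre.length_le
  refine ⟨rfl, ?_, (hpre.letterIn_iff ht).2 hut, fun h => ?_, hlast⟩
  · refine forall_mem_take_iff_letterIn.2 fun i hi hiw => ?_
    exact (hpre.letterIn_iff hiw).2 (forall_mem_take_iff_letterIn.1 huI i hi (by omega))
  · exact (hpre.letterIn_iff (by omega)).2 (humid (by omega))

theorem noCrossOverlap_Sijk_Sijk (hIJ : Disjoint I J) (hk : n ≤ 2 * k) :
    NoCrossOverlap n (Sijk I J k n) (Sijk I J k n) := by
  rintro u ⟨hul, huI, -, -, -⟩ v ⟨hvl, -, hvk, hvn, -⟩ w hw hm ⟨hpre, hsuf⟩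
  have hkm := run_lt_length_of_overlap hIJ hpre hsuf hw huI (by rwa [hvl])
  have := LetterIn.lt_length hvk
  exact false_of_overlap hIJ hpre hsuf (i := k - (n - w.length)) (by omega) (by omega)
    (forall_mem_take_iff_letterIn.1 huI _ (by omega) (by omega)) hvk

theorem noCrossOverlap_Sijk_Uset (hIJ : Disjoint I J) (htk : t ≤ k) :
    NoCrossOverlap n (Sijk I J k n) (Uset I J n k t n) := by
  rintro u ⟨hul, huI, huk, -, -⟩ v ⟨⟨hvl, -, hvt, -, hvn⟩, hvU⟩ w hw hm ⟨hpre, hsuf⟩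
  have hkm := run_lt_length_of_overlap hIJ hpre hsuf hw huI (by rwa [hvl])
  rcases le_or_gt (n - t) w.length with hlong | hshort
  · exact false_of_overlap hIJ hpre hsuf (i := t - (n - w.length)) (by omega) (by omega)
      (forall_mem_take_iff_letterIn.1 huI _ (by omega) (by omega)) hvt
  -- the suffix of `v` starting at the last `t` letters of the `I^k`-run of `u` lies in `V(ℓ)`
  set ℓ := w.length + t - k
  refine hvU ℓ (by omega) (by omega) (by omega)
    ⟨by rw [List.length_drop, hvl]; omega, ?_, ?_, by omega, ?_⟩
  · refine forall_mem_take_iff_letterIn.2 fun i hi _ => letterIn_drop.2 ?_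
    exact letterIn_of_overlap hpre hsuf (i := k - t + i) (by omega) (by omega)
      (forall_mem_take_iff_letterIn.1 huI _ (by omega) (by omega))
  · exact letterIn_drop.2 (letterIn_of_overlap hpre hsuf (by omega) (by omega) huk)
  · refine letterIn_drop.2 ?_
    rwa [show n - ℓ + (ℓ - 1) = n - 1 by omega]

theorem noCrossOverlap_Uset_Sijk (hIJ : Disjoint I J) (hnt : n ≤ k + t + 1) :
    NoCrossOverlap n (Uset I J n k t n) (Sijk I J k n) := by
  rintro u ⟨⟨hul, huI, hut, humid, -⟩, -⟩ v ⟨hvl, hvI, hvk, hvn, -⟩ w hw hm ⟨hpre, hsuf⟩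
  have htm := run_lt_length_of_overlap hIJ hpre hsuf hw huI (by rwa [hvl])
  rcases lt_trichotomy w.length (n - k + t) with hlt | heq | hgt
  · exact false_of_overlap hIJ hpre hsuf (i := k - (n - w.length)) (by omega) (by omega)
      (forall_mem_take_iff_letterIn.1 huI _ (by omega) (by omega)) hvk
  · exact false_of_overlap hIJ hpre hsuf (i := w.length - 1) (j := n - 1) (by omega) (by omega)
      (by rw [heq]; exact humid (by omega)) hvn
  · exact false_of_overlap hIJ.symm hpre hsuf (i := t) (j := n - w.length + t) (by omega)
      (by omega) hut (forall_mem_take_iff_letterIn.1 hvI (n - w.length + t) (by omega) (by omega))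

theorem noCrossOverlap_Uset_Uset (hIJ : Disjoint I J) :
    NoCrossOverlap n (Uset I J n k t n) (Uset I J n k t n) := by
  rintro u ⟨hu, -⟩ v ⟨⟨hvl, -, hvt, -, hvn⟩, hvU⟩ w hw hm ⟨hpre, hsuf⟩
  have ⟨_, huI, _, humid, _⟩ := hu
  have htm := run_lt_length_of_overlap hIJ hpre hsuf hw huI (by rwa [hvl])
  have := LetterIn.lt_length hvt
  have hwlast : LetterIn J w (w.length - 1) := (hsuf.letterIn_iff (j := n - 1) (by omega)).2 hvn
  rcases le_or_gt (n - t) w.length with hlong | hshort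
  · exact false_of_overlap hIJ hpre hsuf (i := t - (n - w.length)) (by omega) (by omega)
      (forall_mem_take_iff_letterIn.1 huI _ (by omega) (by omega)) hvt
  by_cases hmid : w.length = n - k + t
  · have hwmid : LetterIn I w (w.length - 1) :=
      (hpre.letterIn_iff (by omega)).2 (by rw [hmid]; exact humid (by omega))
    exact hwmid.not_letterIn hIJ hwlast
  refine hvU w.length (by omega) (by omega) hmid ?_
  have hwv : v.drop (n - w.length) = w := by
    rw [← hvl]
    exact (List.suffix_iff_eq_drop.1 hsuf).symm
  rw [hwv]
  exact mem_Vset_of_prefix hu hpre htm hwlast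

end Codes

theorem stmt14_general (q n k t : ℕ) (hn : 7 ≤ n) (hk1 : n ≤ 2 * k)
    (ht : t = max 2 (n - k - 1))
    (I J : Set (Fin q)) (hd : I ∩ J = ∅) :
    IsCBF (Sijk I J k n ∪ Uset I J n k t n) ∧
    (∀ u ∈ Uset I J n k t n, ∀ v ∈ Sijk I J k n, ∀ w : List (Fin q),
      w ≠ [] → w.length < n → ¬ (w <+: u ∧ w <:+ v)) ∧
    (∀ u ∈ Sijk I J k n, ∀ v ∈ Uset I J n k t n, ∀ w : List (Fin q),
      w ≠ [] → w.length < n → ¬ (w <+: u ∧ w <:+ v)) := by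
  have hIJ : Disjoint I J := Set.disjoint_iff_inter_eq_empty.2 hd
  have hSU := noCrossOverlap_Sijk_Uset (n := n) hIJ (show t ≤ k by omega)
  have hUS := noCrossOverlap_Uset_Sijk hIJ (show n ≤ k + t + 1 by omega)
  refine ⟨?_, hUS, hSU⟩
  exact isCBF_union_of_noCrossOverlap (fun _ hu => hu.1) (fun _ hu => hu.1.1)
    (noCrossOverlap_Sijk_Sijk hIJ hk1) hSU hUS (noCrossOverlap_Uset_Uset hIJ)

theorem stmt14 (q n k t : ℕ) (hn : 7 ≤ n) (hq : 1 < q) (hk1 : n ≤ 2 * k) (hk2 : k ≤ n - 2)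
    (ht : t = max 2 (n - k - 1))
    (I J : Set (Fin q)) (hIJ : I ∪ J = Set.univ) (hd : I ∩ J = ∅)
    (hI : I.Nonempty) (hJ : J.Nonempty) :
    IsCBF (Sijk I J k n ∪ Uset I J n k t n) ∧
    (∀ u ∈ Uset I J n k t n, ∀ v ∈ Sijk I J k n, ∀ w : List (Fin q),
      w ≠ [] → w.length < n → ¬ (w <+: u ∧ w <:+ v)) ∧
    (∀ u ∈ Sijk I J k n, ∀ v ∈ Uset I J n k t n, ∀ w : List (Fin q),
      w ≠ [] → w.length < n → ¬ (w <+: u ∧ w <:+ v)) :=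
  stmt14_general q n k t hn hk1 ht I J hd
end

section
/- Let n ≥ 7, q > 1, n/2 ≤ k ≤ n-2, t = max{2, n-k-1}. Define Q_m(n) = {s ∈ V_{I,J}^{(t)}(n) : the suffix of s of length m belongs to V_{I,J}^{(t)}(m)} and P_m(n) = {s ∈ V_{I,J}^{(t)}(n) : the suffix of s of length m belongs to U_{I,J}^{(t)}(m)}. Then the union of Q_m(n) over all t+1 ≤ m ≤ n-(t+1) with m ≠ n-k+t equals the union of P_m(n) over the same range of m. -/
open List

theorem stmt15 (q n k t : ℕ) (hn : 7 ≤ n) (hq : 1 < q) (hk1 : n ≤ 2 * k) (hk2 : k ≤ n - 2)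
    (ht : t = max 2 (n - k - 1))
    (I J : Set (Fin q)) (hIJ : I ∪ J = Set.univ) (hd : I ∩ J = ∅)
    (hI : I.Nonempty) (hJ : J.Nonempty) :
    {s | ∃ m : ℕ, t + 1 ≤ m ∧ m + (t + 1) ≤ n ∧ m ≠ n - k + t ∧
        s ∈ Vset I J n k t n ∧ s.drop (n - m) ∈ Vset I J n k t m} =
    {s | ∃ m : ℕ, t + 1 ≤ m ∧ m + (t + 1) ≤ n ∧ m ≠ n - k + t ∧
        s ∈ Vset I J n k t n ∧ s.drop (n - m) ∈ Uset I J n k t m} := by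
  classical
  ext s
  simp only [Set.mem_setOf_eq]
  constructor
  · rintro ⟨m, hm1, hm2, hm3, hs, hv⟩
    have hex : ∃ m, t + 1 ≤ m ∧ m + (t + 1) ≤ n ∧ m ≠ n - k + t ∧
        s.drop (n - m) ∈ Vset I J n k t m := ⟨m, hm1, hm2, hm3, hv⟩
    obtain ⟨h1, h2, h3, h4⟩ := Nat.find_spec hex
    refine ⟨Nat.find hex, h1, h2, h3, hs, h4, ?_⟩
    intro ℓ hl1 hl2 hl3 hmem
    have hlt : ℓ < Nat.find hex := by omega
    apply Nat.find_min hex hlt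
    refine ⟨hl1, by omega, hl3, ?_⟩
    rw [List.drop_drop] at hmem
    have heq : n - Nat.find hex + (Nat.find hex - ℓ) = n - ℓ := by omega
    rwa [heq] at hmem
  · rintro ⟨m, h1, h2, h3, h4, h5⟩
    exact ⟨m, h1, h2, h3, h4, h5.1⟩
end

section
/- Let n ≥ 7, q > 1, n/2 ≤ k ≤ n-2, t = max{2, n-k-1}, and let I, J be a bipartition of Z_q. For integers m, ℓ with t+1 ≤ m < ℓ ≤ n-(t+1) and m, ℓ ≠ n-k+t, the sets P_m(n) and P_ℓ(n) are disjoint, where P_m(n) = {s ∈ V_{I,J}^{(t)}(n) : the suffix of s of length m belongs to U_{I,J}^{(t)}(m)}. -/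
open List

theorem stmt16 (q n k t m ℓ : ℕ) (hn : 7 ≤ n) (hq : 1 < q) (hk1 : n ≤ 2 * k)
    (hk2 : k ≤ n - 2) (ht : t = max 2 (n - k - 1))
    (hm1 : t + 1 ≤ m) (hml : m < ℓ) (hl2 : ℓ + (t + 1) ≤ n)
    (hm2 : m ≠ n - k + t) (hl3 : ℓ ≠ n - k + t)
    (I J : Set (Fin q)) (hIJ : I ∪ J = Set.univ) (hd : I ∩ J = ∅)
    (hI : I.Nonempty) (hJ : J.Nonempty) :
    {s | s ∈ Vset I J n k t n ∧ s.drop (n - m) ∈ Uset I J n k t m} ∩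
      {s | s ∈ Vset I J n k t n ∧ s.drop (n - ℓ) ∈ Uset I J n k t ℓ} = ∅ := by
  apply Set.eq_empty_iff_forall_notMem.2
  rintro s ⟨⟨-, hUm⟩, ⟨-, hUl⟩⟩
  set w := s.drop (n - ℓ) with hw
  have hln : ℓ ≤ n := by omega
  have hdrop : s.drop (n - m) = w.drop (ℓ - m) := by
    rw [hw, List.drop_drop]
    congr 1
    omega
  have hVm : s.drop (n - m) ∈ Vset I J n k t m := hUm.1
  by_cases hcase : m + (t + 1) ≤ ℓ
  · exact hUl.2 m hm1 hcase hm2 (hdrop ▸ hVm)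
  · -- ℓ - m ≤ t : conflict between I-prefix of the m-suffix and J at position t of w
    have hd1 : 1 ≤ ℓ - m := by omega
    have hd2 : ℓ - m ≤ t := by omega
    obtain ⟨a, haJ, haw⟩ := hUl.1.2.2.1
    have hIall := hVm.2.1
    rw [hdrop] at hIall
    have hidx : (w.drop (ℓ - m))[t - (ℓ - m)]? = some a := by
      rw [List.getElem?_drop]
      rw [show ℓ - m + (t - (ℓ - m)) = t by omega]
      exact haw
    have hmem : a ∈ (w.drop (ℓ - m)).take t := by
      have htk : ((w.drop (ℓ - m)).take t)[t - (ℓ - m)]? = some a := by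
        rw [List.getElem?_take, if_pos (by omega : t - (ℓ - m) < t)]
        exact hidx
      obtain ⟨hl, rfl⟩ := List.getElem?_eq_some_iff.mp htk
      exact List.getElem_mem hl
    have : a ∈ I ∩ J := ⟨hIall a hmem, haJ⟩
    rw [hd] at this
    exact this
end
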